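/- arXiv:2203.04403 — 10 statements merged into one kernel-verified Lean document; each statement's English description precedes it below -/
import Mathlib

section
/- Let d_1,…,d_p ≥ 2 and n ≥ 1. For each j ∈ {1,…,p} let Δ_j = (Δ_{j,1},…,Δ_{j,d_j−1}, 0)ᵀ ∈ ℝ^{d_j} be a vector whose last entry is 0 and which satisfies ∑_{c=1}^{d_j−1} Δ_{j,c} ≠ 1. Then there exists an invertible (∏_{j=1}^p d_j) × (∏_{j=1}^p d_j) real matrix B, depending only on the vectors Δ_1,…,Δ_p, such that for every family of real matrices Φ^{(1)},…,Φ^{(p)}, where Φ^{(j)} has size d_j × n and every column of Φ^{(j)} sums to 1, one has ⨀_{j=1}^p (Φ^{(j)} − Δ_j 1ᵀ_n) = B · (⨀_{j=1}^p Φ^{(j)}), where 1_n denotes the all-ones vector of length n. -/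
open Finset

/-- Khatri-Rao product of a family of matrices `Φ j : Matrix (Fin (d j)) (Fin n) ℝ`:
the matrix whose rows are indexed by tuples `c` with entry `∏ j, Φ j (c j) m`. -/
def khatriRao {p n : ℕ} {d : Fin p → ℕ}
    (Φ : (j : Fin p) → Matrix (Fin (d j)) (Fin n) ℝ) :
    Matrix ((j : Fin p) → Fin (d j)) (Fin n) ℝ :=
  Matrix.of fun c m => ∏ j, Φ j (c j) m

private lemma aux_mul_one (k : ℕ) (δ : Fin k → ℝ) (t : ℝ)
    (ht : t * (1 - ∑ x, δ x) = 1) :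
    (Matrix.of fun a b : Fin k => (if a = b then (1:ℝ) else 0) - δ a) *
    (Matrix.of fun a b : Fin k => (if a = b then (1:ℝ) else 0) + t * δ a) = 1 := by
  ext a b
  rw [Matrix.mul_apply, Matrix.one_apply]
  have expand : ∀ x : Fin k,
      (Matrix.of fun a b : Fin k => (if a = b then (1:ℝ) else 0) - δ a) a x *
      (Matrix.of fun a b : Fin k => (if a = b then (1:ℝ) else 0) + t * δ a) x b
      = (if a = x then ((if x = b then (1:ℝ) else 0) + t * δ x) else 0)
        - (if x = b then δ a else 0) - δ a * (t * δ x) := by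
    intro x
    simp only [Matrix.of_apply]
    split_ifs <;> ring
  rw [Finset.sum_congr rfl fun x _ => expand x]
  rw [Finset.sum_sub_distrib, Finset.sum_sub_distrib, Finset.sum_ite_eq,
    Finset.sum_ite_eq', ← Finset.mul_sum, ← Finset.mul_sum]
  simp only [Finset.mem_univ, if_true]
  have h1 : δ a * (t * ∑ x, δ x) = δ a * t - δ a := by
    have : δ a * (t * ∑ x, δ x) = δ a * t - δ a * (t * (1 - ∑ x, δ x)) := by ring
    rw [this, ht]; ring
  rw [h1]
  ring

private lemma aux_one_mul (k : ℕ) (δ : Fin k → ℝ) (t : ℝ)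
    (ht : t * (1 - ∑ x, δ x) = 1) :
    (Matrix.of fun a b : Fin k => (if a = b then (1:ℝ) else 0) + t * δ a) *
    (Matrix.of fun a b : Fin k => (if a = b then (1:ℝ) else 0) - δ a) = 1 := by
  ext a b
  rw [Matrix.mul_apply, Matrix.one_apply]
  have expand : ∀ x : Fin k,
      (Matrix.of fun a b : Fin k => (if a = b then (1:ℝ) else 0) + t * δ a) a x *
      (Matrix.of fun a b : Fin k => (if a = b then (1:ℝ) else 0) - δ a) x b
      = (if a = x then ((if x = b then (1:ℝ) else 0) - δ x) else 0)
        + (if x = b then t * δ a else 0) - t * δ a * δ x := by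
    intro x
    simp only [Matrix.of_apply]
    split_ifs <;> ring
  rw [Finset.sum_congr rfl fun x _ => expand x]
  rw [Finset.sum_sub_distrib, Finset.sum_add_distrib, Finset.sum_ite_eq,
    Finset.sum_ite_eq', ← Finset.mul_sum]
  simp only [Finset.mem_univ, if_true]
  have h1 : t * δ a * ∑ x, δ x = t * δ a - δ a := by
    have : t * δ a * ∑ x, δ x = t * δ a - δ a * (t * (1 - ∑ x, δ x)) := by ring
    rw [this, ht]; ring
  rw [h1]
  ring

/-- there is an invertible matrix `B`, depending only on the vectors `Δ j`
(each with last entry `0` and with the sum of its first `d j - 1` entries different from `1`),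
such that for every family of column-stochastic-sum matrices `Φ j`,
`⨀ⱼ (Φ j − Δ j · 1ᵀ) = B · (⨀ⱼ Φ j)`. -/
theorem khatriRao_shift_transform {p n : ℕ} (d : Fin p → ℕ)
    (hd : ∀ j, 2 ≤ d j) (hn : 1 ≤ n)
    (Δ : (j : Fin p) → Fin (d j) → ℝ)
    (hΔlast : ∀ j (c : Fin (d j)), (c : ℕ) = d j - 1 → Δ j c = 0)
    (hΔsum : ∀ j,
      ∑ c ∈ Finset.univ.filter (fun c : Fin (d j) => (c : ℕ) + 1 < d j), Δ j c ≠ 1) :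
    ∃ B : Matrix ((j : Fin p) → Fin (d j)) ((j : Fin p) → Fin (d j)) ℝ,
      IsUnit B ∧
      ∀ Φ : (j : Fin p) → Matrix (Fin (d j)) (Fin n) ℝ,
        (∀ j (m : Fin n), ∑ c, Φ j c m = 1) →
        khatriRao (fun j => Matrix.of fun c m => Φ j c m - Δ j c) = B * khatriRao Φ := by
  classical
  have hs1 : ∀ j, (∑ x, Δ j x) ≠ 1 := by
    intro j
    have hsplit : (∑ x, Δ j x) =
        ∑ c ∈ Finset.univ.filter (fun c : Fin (d j) => (c : ℕ) + 1 < d j), Δ j c := by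
      rw [← Finset.sum_filter_add_sum_filter_not Finset.univ
        (fun c : Fin (d j) => (c : ℕ) + 1 < d j) (Δ j)]
      have hz : ∑ c ∈ Finset.univ.filter (fun c : Fin (d j) => ¬((c : ℕ) + 1 < d j)),
          Δ j c = 0 := by
        apply Finset.sum_eq_zero
        intro c hc
        simp only [Finset.mem_filter, Finset.mem_univ, true_and] at hc
        apply hΔlast
        have := c.isLt
        omega
      rw [hz, add_zero]
    rw [hsplit]
    exact hΔsum j
  have hts : ∀ j, (1 - ∑ x, Δ j x)⁻¹ * (1 - ∑ x, Δ j x) = 1 := by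
    intro j
    refine inv_mul_cancel₀ ?_
    intro h
    exact hs1 j (by linarith)
  set A : (j : Fin p) → Matrix (Fin (d j)) (Fin (d j)) ℝ :=
    fun j => Matrix.of fun a b => (if a = b then (1:ℝ) else 0) - Δ j a with hA
  set A' : (j : Fin p) → Matrix (Fin (d j)) (Fin (d j)) ℝ :=
    fun j => Matrix.of fun a b =>
      (if a = b then (1:ℝ) else 0) + (1 - ∑ x, Δ j x)⁻¹ * Δ j a with hA'
  have hAA' : ∀ j, A j * A' j = 1 := fun j => aux_mul_one (d j) (Δ j) _ (hts j)
  have hA'A : ∀ j, A' j * A j = 1 := fun j => aux_one_mul (d j) (Δ j) _ (hts j)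
  have prod_one : ∀ (c c'' : (j : Fin p) → Fin (d j)),
      (∏ j, (1 : Matrix (Fin (d j)) (Fin (d j)) ℝ) (c j) (c'' j))
        = (1 : Matrix ((j : Fin p) → Fin (d j)) ((j : Fin p) → Fin (d j)) ℝ) c c'' := by
    intro c c''
    rw [Matrix.one_apply]
    by_cases h : c = c''
    · subst h; simp [Matrix.one_apply]
    · rw [if_neg h]
      obtain ⟨j, hj⟩ : ∃ j, c j ≠ c'' j := by
        by_contra hcon
        push_neg at hcon
        exact h (funext hcon)
      apply Finset.prod_eq_zero (Finset.mem_univ j)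
      simp [Matrix.one_apply, hj]
  have hmul : ∀ (M N : (j : Fin p) → Matrix (Fin (d j)) (Fin (d j)) ℝ)
      (c c'' : (j : Fin p) → Fin (d j)),
      ((Matrix.of fun c c' : (j : Fin p) → Fin (d j) => ∏ j, M j (c j) (c' j)) *
       (Matrix.of fun c c' : (j : Fin p) → Fin (d j) => ∏ j, N j (c j) (c' j))) c c''
      = ∏ j, (M j * N j) (c j) (c'' j) := by
    intro M N c c''
    rw [Matrix.mul_apply]
    have step1 : ∀ c' : (j : Fin p) → Fin (d j),
        (Matrix.of fun c c' : (j : Fin p) → Fin (d j) => ∏ j, M j (c j) (c' j)) c c' *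
        (Matrix.of fun c c' : (j : Fin p) → Fin (d j) => ∏ j, N j (c j) (c' j)) c' c''
        = ∏ j, (M j (c j) (c' j) * N j (c' j) (c'' j)) := by
      intro c'
      simp only [Matrix.of_apply]
      rw [← Finset.prod_mul_distrib]
    rw [Finset.sum_congr rfl fun c' _ => step1 c']
    have key := Finset.prod_univ_sum (fun j => (Finset.univ : Finset (Fin (d j))))
      (fun j y => M j (c j) y * N j y (c'' j))
    rw [← Fintype.piFinset_univ, ← key]
    exact Finset.prod_congr rfl fun j _ => (Matrix.mul_apply).symm
  refine ⟨Matrix.of fun c c' : (j : Fin p) → Fin (d j) => ∏ j, A j (c j) (c' j), ?_, ?_⟩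
  · have hBC : (Matrix.of fun c c' : (j : Fin p) → Fin (d j) => ∏ j, A j (c j) (c' j)) *
        (Matrix.of fun c c' : (j : Fin p) → Fin (d j) => ∏ j, A' j (c j) (c' j)) = 1 := by
      ext c c''
      rw [hmul A A' c c'', ← prod_one c c'']
      exact Finset.prod_congr rfl fun j _ => by rw [hAA' j]
    have hCB : (Matrix.of fun c c' : (j : Fin p) → Fin (d j) => ∏ j, A' j (c j) (c' j)) *
        (Matrix.of fun c c' : (j : Fin p) → Fin (d j) => ∏ j, A j (c j) (c' j)) = 1 := by
      ext c c''
      rw [hmul A' A c c'', ← prod_one c c'']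
      exact Finset.prod_congr rfl fun j _ => by rw [hA'A j]
    exact ⟨⟨_, _, hBC, hCB⟩, rfl⟩
  · intro Φ hΦ
    ext c m
    show (∏ j, ((Matrix.of fun c m => Φ j c m - Δ j c) : Matrix (Fin (d j)) (Fin n) ℝ) (c j) m)
        = _
    rw [Matrix.mul_apply]
    have step1 : ∀ c' : (j : Fin p) → Fin (d j),
        (Matrix.of fun c c' : (j : Fin p) → Fin (d j) => ∏ j, A j (c j) (c' j)) c c' *
          khatriRao Φ c' m
        = ∏ j, (A j (c j) (c' j) * Φ j (c' j) m) := by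
      intro c'
      simp only [Matrix.of_apply, khatriRao]
      rw [← Finset.prod_mul_distrib]
    rw [Finset.sum_congr rfl fun c' _ => step1 c']
    have key := Finset.prod_univ_sum (fun j => (Finset.univ : Finset (Fin (d j))))
      (fun j y => A j (c j) y * Φ j y m)
    rw [← Fintype.piFinset_univ, ← key]
    refine Finset.prod_congr rfl fun j _ => ?_
    simp only [Matrix.of_apply, hA]
    rw [Finset.sum_congr rfl
      (fun x _ => sub_mul (if c j = x then (1:ℝ) else 0) (Δ j (c j)) (Φ j x m))]
    rw [Finset.sum_sub_distrib, ← Finset.mul_sum, hΦ j m, mul_one]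
    congr 1
    rw [Finset.sum_congr rfl (fun x _ => by
      rw [ite_mul, one_mul, zero_mul] :
        ∀ x ∈ Finset.univ, (if c j = x then (1:ℝ) else 0) * Φ j x m
          = if c j = x then Φ j x m else 0)]
    simp [Finset.sum_ite_eq]
end

section
/- Let (s, θ, ν) be a valid BLESS parameter set and suppose some latent variable α_k has exactly one observed child, i.e., there is exactly one index j₀ ∈ {1,…,p} with s(j₀) = k. Then for every ε > 0 there exists a valid BLESS parameter set (s, θ̄, ν̄) with the same parent map s such that: (i) the joint probability mass functions agree, P(y = c | s, θ, ν) = P(y = c | s, θ̄, ν̄) for every c ∈ {1,…,d}^p; (ii) θ̄^{(j₀)}_{1|1} ≠ θ^{(j₀)}_{1|1}; and (iii) |θ̄^{(j)}_{c|x} − θ^{(j)}_{c|x}| < ε and |ν̄_α − ν_α| < ε for all j ∈ {1,…,p}, c ∈ {1,…,d}, x ∈ {0,1}, α ∈ {0,1}^K. In particular, the model parameters are not locally identifiable. -/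
open Finset

/-- Joint probability mass function of the observed vector `c : Fin p → Fin d` under the
BLESS model with parent map `s`, conditional probability tables `θ` (where `θ j c x` is
`θ^{(j)}_{c|x}`), and latent proportion vector `ν`. -/
def blessPMF {K p d : ℕ} (s : Fin p → Fin K) (θ : Fin p → Fin d → Bool → ℝ)
    (ν : (Fin K → Bool) → ℝ) (c : Fin p → Fin d) : ℝ :=
  ∑ α : Fin K → Bool, ν α * ∏ j, θ j (c j) (α (s j))

/-- Validity of a BLESS parameter set `(θ, ν)`: all conditional probabilities strictly
between 0 and 1, columns of each conditional probability table summing to one, the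
monotonicity constraint `θ^{(j)}_{c|1} > θ^{(j)}_{c|0}` for every non-last category `c`,
strictly positive proportions summing to one. -/
structure BlessValid {K p d : ℕ} (θ : Fin p → Fin d → Bool → ℝ)
    (ν : (Fin K → Bool) → ℝ) : Prop where
  theta_pos : ∀ j c x, 0 < θ j c x
  theta_lt_one : ∀ j c x, θ j c x < 1
  theta_sum : ∀ j x, ∑ c, θ j c x = 1
  theta_mono : ∀ j (c : Fin d), (c : ℕ) + 1 < d → θ j c false < θ j c true
  nu_pos : ∀ α, 0 < ν α
  nu_sum : ∑ α, ν α = 1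


def fill {K : ℕ} (k : Fin K) (β : {j : Fin K // j ≠ k} → Bool) (b : Bool) : Fin K → Bool :=
  fun j => if h : j = k then b else β ⟨j, h⟩

lemma fill_self {K : ℕ} (k : Fin K) (β : {j : Fin K // j ≠ k} → Bool) (b : Bool) :
    fill k β b k = b := dif_pos rfl

lemma fill_ne {K : ℕ} (k : Fin K) (β : {j : Fin K // j ≠ k} → Bool) (b : Bool)
    {j : Fin K} (h : j ≠ k) : fill k β b j = β ⟨j, h⟩ := dif_neg h

lemma update_fill {K : ℕ} (k : Fin K) (β : {j : Fin K // j ≠ k} → Bool) :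
    Function.update (fill k β false) k true = fill k β true := by
  funext j
  by_cases h : j = k
  · subst h; simp [fill_self]
  · simp [Function.update, h, fill_ne k β _ h]

lemma splitAt_symm_eq_fill {K : ℕ} (k : Fin K) (b : Bool)
    (β : {j : Fin K // j ≠ k} → Bool) :
    (Equiv.funSplitAt k Bool).symm (b, β) = fill k β b := by
  funext j
  rw [Equiv.funSplitAt_symm_apply]
  unfold fill
  split_ifs with h
  · subst h; rfl
  · rfl

lemma sum_fill {K : ℕ} (k : Fin K) (F : (Fin K → Bool) → ℝ) :
    ∑ α : Fin K → Bool, F α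
      = ∑ β : {j : Fin K // j ≠ k} → Bool, (F (fill k β true) + F (fill k β false)) := by
  rw [← Equiv.sum_comp (Equiv.funSplitAt k Bool).symm F]
  rw [Fintype.sum_prod_type, Fintype.sum_bool]
  rw [← Finset.sum_add_distrib]
  exact Finset.sum_congr rfl fun β _ => by
    rw [splitAt_symm_eq_fill, splitAt_symm_eq_fill]


/-- if a latent variable `α_k` has exactly one observed child `y_{j₀}`, then
the BLESS model parameters are not locally identifiable: arbitrarily close to the true
parameters there are alternative valid parameters, differing in `θ^{(j₀)}_{1|1}`, that
give the same joint probability mass function. -/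
theorem bless_one_child_not_locally_identifiable {K p d : ℕ} (hd : 2 ≤ d)
    (s : Fin p → Fin K) (θ : Fin p → Fin d → Bool → ℝ) (ν : (Fin K → Bool) → ℝ)
    (hval : BlessValid θ ν) (k : Fin K) (j0 : Fin p)
    (hchild : s j0 = k) (huniq : ∀ j, s j = k → j = j0) :
    ∀ ε > (0 : ℝ), ∃ (θ' : Fin p → Fin d → Bool → ℝ) (ν' : (Fin K → Bool) → ℝ),
      BlessValid θ' ν' ∧
      (∀ c, blessPMF s θ ν c = blessPMF s θ' ν' c) ∧
      θ' j0 ⟨0, by omega⟩ true ≠ θ j0 ⟨0, by omega⟩ true ∧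
      (∀ j c x, |θ' j c x - θ j c x| < ε) ∧
      (∀ α, |ν' α - ν α| < ε) := by
  intro ε hε
  haveI : Nonempty (Fin d) := ⟨⟨0, by omega⟩⟩
  set m : ℝ := Finset.univ.inf' Finset.univ_nonempty
    (fun c : Fin d => min (θ j0 c true) (1 - θ j0 c true)) with hm_def
  have hm : 0 < m := by
    rw [hm_def, Finset.lt_inf'_iff]
    intro c _
    exact lt_min (hval.theta_pos j0 c true) (by linarith [hval.theta_lt_one j0 c true])
  have hmle1 : ∀ c : Fin d, m ≤ θ j0 c true := fun c =>
    le_trans (Finset.inf'_le _ (Finset.mem_univ c)) (min_le_left _ _)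
  have hmle2 : ∀ c : Fin d, m ≤ 1 - θ j0 c true := fun c =>
    le_trans (Finset.inf'_le _ (Finset.mem_univ c)) (min_le_right _ _)
  set t : ℝ := min ε m / 2 with ht_def
  have ht0 : 0 < t := by
    rw [ht_def]; have := lt_min hε hm; linarith
  have htε : t < ε := by
    rw [ht_def]; have := min_le_left ε m; linarith
  have htm : t < m := by
    rw [ht_def]; have := min_le_right ε m; linarith
  have h1t : (0:ℝ) < 1 + t := by linarith
  have hδ : ∀ c : Fin d, |θ j0 c true - θ j0 c false| < 1 := by
    intro c
    rw [abs_sub_lt_iff]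
    constructor <;>
      nlinarith [hval.theta_pos j0 c true, hval.theta_pos j0 c false,
        hval.theta_lt_one j0 c true, hval.theta_lt_one j0 c false]
  have hνle : ∀ α, ν α ≤ 1 := fun α =>
    hval.nu_sum ▸ Finset.single_le_sum (fun a _ => (hval.nu_pos a).le) (Finset.mem_univ α)
  refine ⟨fun j c x => if j = j0 ∧ x = true then
      θ j0 c true + t * (θ j0 c true - θ j0 c false) else θ j c x,
    fun α => if α k then ν α / (1 + t)
      else ν α + ν (Function.update α k true) * (t / (1 + t)),
    ?_, ?_, ?_, ?_, ?_⟩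
  · constructor
    · intro j c x
      split_ifs with h
      · have h1 := mul_le_mul_of_nonneg_left (neg_abs_le (θ j0 c true - θ j0 c false)) ht0.le
        have h2 := mul_le_mul_of_nonneg_left (hδ c).le ht0.le
        have := hmle1 c
        nlinarith
      · exact hval.theta_pos j c x
    · intro j c x
      split_ifs with h
      · have h1 := mul_le_mul_of_nonneg_left (le_abs_self (θ j0 c true - θ j0 c false)) ht0.le
        have h2 := mul_le_mul_of_nonneg_left (hδ c).le ht0.le
        have := hmle2 c
        nlinarith
      · exact hval.theta_lt_one j c x
    · intro j x
      by_cases h : j = j0 ∧ x = true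
      · simp only [if_pos h]
        rw [Finset.sum_add_distrib, ← Finset.mul_sum, Finset.sum_sub_distrib,
          hval.theta_sum j0 true, hval.theta_sum j0 false]
        ring
      · simp only [if_neg h]
        exact hval.theta_sum j x
    · intro j c hc
      have hfalse : ¬(j = j0 ∧ false = true) := by simp
      rw [if_neg hfalse]
      split_ifs with h2
      · rw [h2.1]
        have hmono := hval.theta_mono j0 c hc
        nlinarith
      · exact hval.theta_mono j c hc
    · intro α
      split_ifs with h
      · exact div_pos (hval.nu_pos α) h1t
      · have h1 := hval.nu_pos α
        have h2 := hval.nu_pos (Function.update α k true)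
        have h3 : 0 < t / (1 + t) := div_pos ht0 h1t
        nlinarith
    · rw [sum_fill k]
      have : ∀ β : {j : Fin K // j ≠ k} → Bool,
          ((fun α => if α k then ν α / (1 + t)
            else ν α + ν (Function.update α k true) * (t / (1 + t))) (fill k β true) +
           (fun α => if α k then ν α / (1 + t)
            else ν α + ν (Function.update α k true) * (t / (1 + t))) (fill k β false))
          = ν (fill k β true) + ν (fill k β false) := by
        intro β
        simp only [fill_self, if_true, if_false, update_fill, Bool.false_eq_true]
        field_simp
        ring
      rw [Finset.sum_congr rfl fun β _ => this β, ← sum_fill k]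
      exact hval.nu_sum
  · intro c
    have hsne : ∀ j : Fin p, j ≠ j0 → s j ≠ k := fun j hj hsk => hj (huniq j hsk)
    unfold blessPMF
    have hsplit : ∀ (τ : Fin p → Fin d → Bool → ℝ) (μ : (Fin K → Bool) → ℝ),
        (∀ j, j ≠ j0 → ∀ cc x, τ j cc x = θ j cc x) →
        (∑ α : Fin K → Bool, μ α * ∏ j, τ j (c j) (α (s j)))
          = ∑ β : {j : Fin K // j ≠ k} → Bool,
              (μ (fill k β true) * (τ j0 (c j0) true
                  * ∏ j ∈ Finset.univ.erase j0, θ j (c j) (fill k β false (s j)))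
                + μ (fill k β false) * (τ j0 (c j0) false
                  * ∏ j ∈ Finset.univ.erase j0, θ j (c j) (fill k β false (s j)))) := by
      intro τ μ hτ
      rw [sum_fill k]
      refine Finset.sum_congr rfl fun β _ => ?_
      have key : ∀ b : Bool, μ (fill k β b) * ∏ j, τ j (c j) (fill k β b (s j))
          = μ (fill k β b) * (τ j0 (c j0) b
              * ∏ j ∈ Finset.univ.erase j0, θ j (c j) (fill k β false (s j))) := by
        intro b
        congr 1
        rw [← Finset.mul_prod_erase Finset.univ _ (Finset.mem_univ j0), hchild, fill_self]
        congr 1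
        refine Finset.prod_congr rfl fun j hj => ?_
        have hne : s j ≠ k := hsne j (Finset.ne_of_mem_erase hj)
        rw [hτ j (Finset.ne_of_mem_erase hj), fill_ne k β b hne, fill_ne k β false hne]
      rw [key true, key false]
    have hτ' : ∀ j, j ≠ j0 → ∀ (cc : Fin d) (x : Bool),
        (fun j (c : Fin d) (x : Bool) => if j = j0 ∧ x = true then
          θ j0 c true + t * (θ j0 c true - θ j0 c false) else θ j c x) j cc x = θ j cc x := by
      intro j hj cc x
      simp only [if_neg (fun h : _ ∧ _ => hj h.1)]
    refine (hsplit θ ν fun _ _ _ _ => rfl).trans ?_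
    refine Eq.trans ?_ (hsplit _ _ hτ').symm
    refine Finset.sum_congr rfl fun β _ => ?_
    simp only [fill_self, update_fill, if_true, Bool.false_eq_true, if_false, and_true,
      and_false, eq_self_iff_true, and_self, if_pos, if_neg]
    field_simp
    ring
  · dsimp only
    rw [if_pos ⟨rfl, rfl⟩]
    intro heq
    have hc1 : ((⟨0, by omega⟩ : Fin d) : ℕ) + 1 < d := by simp; omega
    have := hval.theta_mono j0 ⟨0, by omega⟩ hc1
    nlinarith
  · intro j cc x
    dsimp only
    split_ifs with h
    · obtain ⟨hj, hx⟩ := h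
      rw [hj, hx]
      have heq : θ j0 cc true + t * (θ j0 cc true - θ j0 cc false) - θ j0 cc true
          = t * (θ j0 cc true - θ j0 cc false) := by ring
      rw [heq, abs_mul, abs_of_pos ht0]
      nlinarith [hδ cc, abs_nonneg (θ j0 cc true - θ j0 cc false)]
    · simp only [sub_self, abs_zero]; exact hε
  · intro α
    dsimp only
    split_ifs with h
    · have heq : ν α / (1 + t) - ν α = -(ν α * t / (1 + t)) := by field_simp; ring
      rw [heq, abs_neg, abs_of_nonneg (div_nonneg (mul_nonneg (hval.nu_pos α).le ht0.le) h1t.le), div_lt_iff₀ h1t]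
      nlinarith [hνle α, hval.nu_pos α]
    · have heq : ν α + ν (Function.update α k true) * (t / (1 + t)) - ν α
          = ν (Function.update α k true) * t / (1 + t) := by field_simp; ring
      rw [heq, abs_of_nonneg (div_nonneg (mul_nonneg (hval.nu_pos _).le ht0.le) h1t.le), div_lt_iff₀ h1t]
      nlinarith [hνle (Function.update α k true), hval.nu_pos (Function.update α k true)]
end

section
/- Let (s, θ, ν) and (s̄, θ̄, ν̄) be two valid BLESS parameter sets (with the same K, p, d) whose joint probability mass functions agree: P(y = c | s, θ, ν) = P(y = c | s̄, θ̄, ν̄) for every c ∈ {1,…,d}^p. If every latent variable has at least two observed children under s, i.e., |s^{-1}(k)| ≥ 2 for every k ∈ {1,…,K}, then the latent-to-observed star-forest structure is identifiable: there exists a permutation σ of {1,…,K} such that s̄(j) = σ(s(j)) for every j ∈ {1,…,p}. -/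
open Finset

noncomputable section BlessAuxSec

/-- Indicator that a category is the first one. -/
def chiD {d : ℕ} (c : Fin d) : ℝ := if (c : ℕ) = 0 then 1 else 0

/-- Indicator of a Boolean. -/
def chiB (b : Bool) : ℝ := if b then 1 else 0

lemma chiB_nonneg (b : Bool) : 0 ≤ chiB b := by cases b <;> simp [chiB]
lemma chiB_le_one (b : Bool) : chiB b ≤ 1 := by cases b <;> norm_num [chiB]
lemma chiB_sq (b : Bool) : chiB b * chiB b = chiB b := by cases b <;> simp [chiB]

def margP1 {p d : ℕ} (f : (Fin p → Fin d) → ℝ) (j : Fin p) : ℝ :=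
  ∑ c, f c * chiD (c j)
def margP2 {p d : ℕ} (f : (Fin p → Fin d) → ℝ) (j l : Fin p) : ℝ :=
  ∑ c, f c * (chiD (c j) * chiD (c l))
def covA {p d : ℕ} (f : (Fin p → Fin d) → ℝ) (j l : Fin p) : ℝ :=
  margP2 f j l - margP1 f j * margP1 f l

def rhoS {K : ℕ} (ν : (Fin K → Bool) → ℝ) (k : Fin K) : ℝ := ∑ α, ν α * chiB (α k)
def covC {K : ℕ} (ν : (Fin K → Bool) → ℝ) (k k' : Fin K) : ℝ :=
  (∑ α, ν α * (chiB (α k) * chiB (α k'))) - rhoS ν k * rhoS ν k'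

lemma covC_comm {K : ℕ} (ν : (Fin K → Bool) → ℝ) (k k' : Fin K) :
    covC ν k k' = covC ν k' k := by
  unfold covC
  have h : ∀ α : Fin K → Bool, ν α * (chiB (α k) * chiB (α k'))
      = ν α * (chiB (α k') * chiB (α k)) := fun α => by ring
  rw [Finset.sum_congr rfl fun α _ => h α]
  ring

lemma sum_prod_phi {p d : ℕ} (g φ : Fin p → Fin d → ℝ) (S : Finset (Fin p))
    (hg : ∀ m ∉ S, ∑ x, g m x = 1) :
    (∑ c : Fin p → Fin d, (∏ m, g m (c m)) * ∏ m ∈ S, φ m (c m))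
      = ∏ m ∈ S, ∑ x, g m x * φ m x := by
  classical
  have h1 : ∀ c : Fin p → Fin d,
      (∏ m, g m (c m)) * ∏ m ∈ S, φ m (c m)
        = ∏ m, (g m (c m) * if m ∈ S then φ m (c m) else 1) := by
    intro c
    rw [Finset.prod_mul_distrib]
    congr 1
    rw [Finset.prod_ite_mem, Finset.univ_inter]
  calc (∑ c : Fin p → Fin d, (∏ m, g m (c m)) * ∏ m ∈ S, φ m (c m))
      = ∑ c : Fin p → Fin d, ∏ m, (g m (c m) * if m ∈ S then φ m (c m) else 1) :=
        Finset.sum_congr rfl fun c _ => h1 c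
    _ = ∏ m, ∑ x, (g m x * if m ∈ S then φ m x else 1) :=
        (Fintype.prod_sum fun m x => g m x * if m ∈ S then φ m x else 1).symm
    _ = ∏ m, (if m ∈ S then ∑ x, g m x * φ m x else 1) := by
        refine Finset.prod_congr rfl fun m _ => ?_
        by_cases hm : m ∈ S
        · simp [hm]
        · simp only [hm, if_false, mul_one]
          exact hg m hm
    _ = ∏ m ∈ S, ∑ x, g m x * φ m x := by
        rw [Finset.prod_ite_mem, Finset.univ_inter]

end BlessAuxSec
lemma sum_mul_chiD {d : ℕ} (hd0 : 0 < d) (f : Fin d → ℝ) :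
    ∑ x, f x * chiD x = f ⟨0, hd0⟩ := by
  rw [Finset.sum_eq_single (⟨0, hd0⟩ : Fin d)]
  · simp [chiD]
  · intro x _ hx
    have hxv : (x : ℕ) ≠ 0 := fun h => hx (Fin.ext h)
    simp [chiD, hxv]
  · simp

lemma bless_sum_phi {K p d : ℕ} (s : Fin p → Fin K) (θ : Fin p → Fin d → Bool → ℝ)
    (ν : (Fin K → Bool) → ℝ) (hsum : ∀ j x, ∑ c, θ j c x = 1)
    (φ : Fin p → Fin d → ℝ) (S : Finset (Fin p)) :
    (∑ c : Fin p → Fin d, blessPMF s θ ν c * ∏ m ∈ S, φ m (c m))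
      = ∑ α : Fin K → Bool, ν α * ∏ m ∈ S, ∑ x, θ m x (α (s m)) * φ m x := by
  unfold blessPMF
  simp only [Finset.sum_mul, mul_assoc]
  rw [Finset.sum_comm]
  refine Finset.sum_congr rfl fun α _ => ?_
  rw [← Finset.mul_sum]
  congr 1
  exact sum_prod_phi (fun m x => θ m x (α (s m))) φ S (fun m _ => hsum m (α (s m)))

lemma margP1_bless {K p d : ℕ} (hd0 : 0 < d) (s : Fin p → Fin K)
    (θ : Fin p → Fin d → Bool → ℝ) (ν : (Fin K → Bool) → ℝ)
    (hsum : ∀ j x, ∑ c, θ j c x = 1) (j : Fin p) :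
    margP1 (blessPMF s θ ν) j = ∑ α, ν α * θ j ⟨0, hd0⟩ (α (s j)) := by
  have h := bless_sum_phi s θ ν hsum (fun _ x => chiD x) {j}
  simp only [Finset.prod_singleton] at h
  rw [margP1, h]
  exact Finset.sum_congr rfl fun α _ => by rw [sum_mul_chiD hd0]

lemma margP2_bless {K p d : ℕ} (hd0 : 0 < d) (s : Fin p → Fin K)
    (θ : Fin p → Fin d → Bool → ℝ) (ν : (Fin K → Bool) → ℝ)
    (hsum : ∀ j x, ∑ c, θ j c x = 1) {j l : Fin p} (hjl : j ≠ l) :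
    margP2 (blessPMF s θ ν) j l
      = ∑ α, ν α * (θ j ⟨0, hd0⟩ (α (s j)) * θ l ⟨0, hd0⟩ (α (s l))) := by
  have h := bless_sum_phi s θ ν hsum (fun _ x => chiD x) {j, l}
  simp only [Finset.prod_pair hjl] at h
  rw [margP2, h]
  exact Finset.sum_congr rfl fun α _ => by rw [sum_mul_chiD hd0, sum_mul_chiD hd0]

lemma covA_bless {K p d : ℕ} (hd0 : 0 < d) (s : Fin p → Fin K)
    (θ : Fin p → Fin d → Bool → ℝ) (ν : (Fin K → Bool) → ℝ)
    (h : BlessValid θ ν) {j l : Fin p} (hjl : j ≠ l) :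
    covA (blessPMF s θ ν) j l
      = (θ j ⟨0, hd0⟩ true - θ j ⟨0, hd0⟩ false) * (θ l ⟨0, hd0⟩ true - θ l ⟨0, hd0⟩ false)
          * covC ν (s j) (s l) := by
  classical
  set z : Fin d := ⟨0, hd0⟩ with hz
  set rj := θ j z false with hrj
  set wj := θ j z true - θ j z false with hwj
  set rl := θ l z false with hrl
  set wl := θ l z true - θ l z false with hwl
  have hθj : ∀ x : Bool, θ j z x = rj + wj * chiB x := by
    intro x; cases x <;> simp [chiB, hrj, hwj]
  have hθl : ∀ x : Bool, θ l z x = rl + wl * chiB x := by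
    intro x; cases x <;> simp [chiB, hrl, hwl]
  have e2 : ∑ α, ν α * (θ j z (α (s j)) * θ l z (α (s l)))
      = rj * rl * (∑ α, ν α) + rj * wl * rhoS ν (s l) + wj * rl * rhoS ν (s j)
        + wj * wl * (∑ α, ν α * (chiB (α (s j)) * chiB (α (s l)))) := by
    have hterm : ∀ α : Fin K → Bool, ν α * (θ j z (α (s j)) * θ l z (α (s l)))
        = rj * rl * ν α + rj * wl * (ν α * chiB (α (s l)))
          + wj * rl * (ν α * chiB (α (s j)))
          + wj * wl * (ν α * (chiB (α (s j)) * chiB (α (s l)))) := by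
      intro α; rw [hθj, hθl]; ring
    rw [Finset.sum_congr rfl fun α _ => hterm α]
    simp only [Finset.sum_add_distrib, ← Finset.mul_sum]
    rfl
  have e1 : ∀ (m : Fin p) (rm wm : ℝ), (∀ x : Bool, θ m z x = rm + wm * chiB x) →
      ∑ α, ν α * θ m z (α (s m)) = rm * (∑ α, ν α) + wm * rhoS ν (s m) := by
    intro m rm wm hm
    have hterm : ∀ α : Fin K → Bool, ν α * θ m z (α (s m))
        = rm * ν α + wm * (ν α * chiB (α (s m))) := by
      intro α; rw [hm]; ring
    rw [Finset.sum_congr rfl fun α _ => hterm α]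
    simp only [Finset.sum_add_distrib, ← Finset.mul_sum]
    rfl
  rw [covA, margP2_bless hd0 s θ ν h.theta_sum hjl, margP1_bless hd0 s θ ν h.theta_sum j,
    margP1_bless hd0 s θ ν h.theta_sum l]
  rw [show (⟨0, hd0⟩ : Fin d) = z from rfl]
  rw [e2, e1 j rj wj hθj, e1 l rl wl hθl, h.nu_sum, covC]
  ring

lemma covC_cs {K : ℕ} (ν : (Fin K → Bool) → ℝ) (hpos : ∀ α, 0 < ν α)
    (hsum : ∑ α, ν α = 1) {k k' : Fin K} (hkk' : k ≠ k') :
    covC ν k k' ^ 2 < covC ν k k * covC ν k' k' := by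
  classical
  obtain ⟨p11, hp11⟩ : ∃ x : ℝ, x = ∑ α, ν α * (chiB (α k) * chiB (α k')) := ⟨_, rfl⟩
  obtain ⟨p10, hp10⟩ : ∃ x : ℝ, x = ∑ α, ν α * (chiB (α k) * (1 - chiB (α k'))) := ⟨_, rfl⟩
  obtain ⟨p01, hp01⟩ : ∃ x : ℝ, x = ∑ α, ν α * ((1 - chiB (α k)) * chiB (α k')) := ⟨_, rfl⟩
  obtain ⟨p00, hp00⟩ : ∃ x : ℝ, x = ∑ α, ν α * ((1 - chiB (α k)) * (1 - chiB (α k'))) := ⟨_, rfl⟩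
  have hnn : ∀ b : Bool, 0 ≤ chiB b := chiB_nonneg
  have hle : ∀ b : Bool, 0 ≤ 1 - chiB b := fun b => by linarith [chiB_le_one b]
  have h11 : 0 < p11 := by
    rw [hp11]
    refine Finset.sum_pos' (fun α _ => mul_nonneg (hpos α).le (mul_nonneg (hnn _) (hnn _)))
      ⟨fun _ => true, Finset.mem_univ _, ?_⟩
    simpa [chiB] using hpos (fun _ => true)
  have h10 : 0 < p10 := by
    rw [hp10]
    refine Finset.sum_pos' (fun α _ => mul_nonneg (hpos α).le (mul_nonneg (hnn _) (hle _)))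
      ⟨fun i => decide (i = k), Finset.mem_univ _, ?_⟩
    have hk'k : (k' = k) = False := by simp [Ne.symm hkk']
    simpa [chiB, hk'k] using hpos (fun i => decide (i = k))
  have h01 : 0 < p01 := by
    rw [hp01]
    refine Finset.sum_pos' (fun α _ => mul_nonneg (hpos α).le (mul_nonneg (hle _) (hnn _)))
      ⟨fun i => decide (i = k'), Finset.mem_univ _, ?_⟩
    have hkk : (k = k') = False := by simp [hkk']
    simpa [chiB, hkk] using hpos (fun i => decide (i = k'))
  have h00 : 0 < p00 := by
    rw [hp00]
    refine Finset.sum_pos' (fun α _ => mul_nonneg (hpos α).le (mul_nonneg (hle _) (hle _)))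
      ⟨fun _ => false, Finset.mem_univ _, ?_⟩
    simpa [chiB] using hpos (fun _ => false)
  have hrk : rhoS ν k = p11 + p10 := by
    rw [rhoS, hp11, hp10, ← Finset.sum_add_distrib]
    exact Finset.sum_congr rfl fun α _ => by ring
  have hrk' : rhoS ν k' = p11 + p01 := by
    rw [rhoS, hp11, hp01, ← Finset.sum_add_distrib]
    exact Finset.sum_congr rfl fun α _ => by ring
  have htot : p11 + p10 + p01 + p00 = 1 := by
    have hone : ∀ α : Fin K → Bool,
        ν α * (chiB (α k) * chiB (α k')) + ν α * (chiB (α k) * (1 - chiB (α k')))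
          + ν α * ((1 - chiB (α k)) * chiB (α k'))
          + ν α * ((1 - chiB (α k)) * (1 - chiB (α k'))) = ν α := fun α => by ring
    rw [hp11, hp10, hp01, hp00, ← Finset.sum_add_distrib, ← Finset.sum_add_distrib,
      ← Finset.sum_add_distrib, Finset.sum_congr rfl fun α _ => hone α, hsum]
  have hsqk : (∑ α, ν α * (chiB (α k) * chiB (α k))) = rhoS ν k := by
    rw [rhoS]; exact Finset.sum_congr rfl fun α _ => by rw [chiB_sq]
  have hsqk' : (∑ α, ν α * (chiB (α k') * chiB (α k'))) = rhoS ν k' := by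
    rw [rhoS]; exact Finset.sum_congr rfl fun α _ => by rw [chiB_sq]
  have hCkk : covC ν k k = (p11 + p10) * (p01 + p00) := by
    rw [covC, hsqk, hrk]
    linear_combination (-(p11 + p10)) * htot
  have hCk'k' : covC ν k' k' = (p11 + p01) * (p10 + p00) := by
    rw [covC, hsqk', hrk']
    linear_combination (-(p11 + p01)) * htot
  have hCkk' : covC ν k k' = p11 * p00 - p10 * p01 := by
    rw [covC, ← hp11, hrk, hrk']
    linear_combination (-p11) * htot
  rw [hCkk, hCk'k', hCkk']
  have t1 : 0 < 4 * (p11 * p00) * (p10 * p01) :=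
    by positivity
  have t2 : 0 < (p11 * p00 + p10 * p01) * ((p11 * p01 + p10 * p00) + (p11 * p10 + p01 * p00)) := by
    have := mul_pos h11 h00; have := mul_pos h10 h01; have := mul_pos h11 h01
    have := mul_pos h10 h00; have := mul_pos h11 h10; have := mul_pos h01 h00
    nlinarith
  have t3 : 0 < (p11 * p01 + p10 * p00) * (p11 * p10 + p01 * p00) := by
    have := mul_pos h11 h01; have := mul_pos h10 h00
    have := mul_pos h11 h10; have := mul_pos h01 h00
    nlinarith
  have key : ((p11 + p10) * (p01 + p00)) * ((p11 + p01) * (p10 + p00))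
      - (p11 * p00 - p10 * p01) ^ 2
      = 4 * (p11 * p00) * (p10 * p01)
        + (p11 * p00 + p10 * p01) * ((p11 * p01 + p10 * p00) + (p11 * p10 + p01 * p00))
        + (p11 * p01 + p10 * p00) * (p11 * p10 + p01 * p00) := by ring
  nlinarith [key, t1, t2, t3]


/-- if two valid BLESS parameter sets give the same joint distribution and
every latent variable has at least two observed children under `s`, then the star-forest
structure is identifiable: the two parent maps agree up to a permutation of the latent
variables. -/
theorem bless_graph_identifiable {K p d : ℕ} (hd : 2 ≤ d)
    (s sb : Fin p → Fin K)
    (θ θb : Fin p → Fin d → Bool → ℝ) (ν νb : (Fin K → Bool) → ℝ)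
    (h1 : BlessValid θ ν) (h2 : BlessValid θb νb)
    (heq : ∀ c, blessPMF s θ ν c = blessPMF sb θb νb c)
    (hchild : ∀ k, 2 ≤ (Finset.univ.filter (fun j => s j = k)).card) :
    ∃ σ : Equiv.Perm (Fin K), ∀ j, sb j = σ (s j) := by
  classical
  have hd0 : 0 < d := by omega
  have hFb : blessPMF s θ ν = blessPMF sb θb νb := funext heq
  have hwpos : ∀ j, 0 < θ j ⟨0, hd0⟩ true - θ j ⟨0, hd0⟩ false := by
    intro j
    have hv : ((⟨0, hd0⟩ : Fin d) : ℕ) + 1 < d := by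
      have : ((⟨0, hd0⟩ : Fin d) : ℕ) = 0 := rfl
      omega
    exact sub_pos.mpr (h1.theta_mono j _ hv)
  have hA1 : ∀ {j l : Fin p}, j ≠ l → covA (blessPMF s θ ν) j l
      = (θ j ⟨0, hd0⟩ true - θ j ⟨0, hd0⟩ false) * (θ l ⟨0, hd0⟩ true - θ l ⟨0, hd0⟩ false)
          * covC ν (s j) (s l) := fun hjl => covA_bless hd0 s θ ν h1 hjl
  have hA2 : ∀ {j l : Fin p}, j ≠ l → covA (blessPMF s θ ν) j l
      = (θb j ⟨0, hd0⟩ true - θb j ⟨0, hd0⟩ false) * (θb l ⟨0, hd0⟩ true - θb l ⟨0, hd0⟩ false)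
          * covC νb (sb j) (sb l) := fun hjl => by
    rw [hFb]; exact covA_bless hd0 sb θb νb h2 hjl
  -- key step: the partition induced by `sb` refines the one induced by `s`
  have hstep : ∀ j1 j2 : Fin p, sb j1 = sb j2 → s j1 = s j2 := by
    intro j1 j2 hb
    by_contra hne
    have hj12 : j1 ≠ j2 := fun h => hne (congrArg s h)
    obtain ⟨j3, hj3mem, hj31⟩ := Finset.exists_mem_ne
      (lt_of_lt_of_le one_lt_two (hchild (s j1))) j1
    have hs3 : s j3 = s j1 := (Finset.mem_filter.mp hj3mem).2
    obtain ⟨j4, hj4mem, hj42⟩ := Finset.exists_mem_ne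
      (lt_of_lt_of_le one_lt_two (hchild (s j2))) j2
    have hs4 : s j4 = s j2 := (Finset.mem_filter.mp hj4mem).2
    have h13 : j1 ≠ j3 := hj31.symm
    have h24 : j2 ≠ j4 := hj42.symm
    have h14 : j1 ≠ j4 := fun h => hne (by rw [h, hs4])
    have h23 : j2 ≠ j3 := fun h => hne (by rw [← hs3, ← h])
    have hCS := covC_cs ν h1.nu_pos h1.nu_sum hne
    have hgt : covA (blessPMF s θ ν) j1 j4 * covA (blessPMF s θ ν) j2 j3
        < covA (blessPMF s θ ν) j1 j3 * covA (blessPMF s θ ν) j2 j4 := by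
      rw [hA1 h13, hA1 h24, hA1 h14, hA1 h23, hs3, hs4, covC_comm ν (s j2) (s j1)]
      nlinarith [hCS, mul_pos (mul_pos (hwpos j1) (hwpos j2)) (mul_pos (hwpos j3) (hwpos j4)),
        sq_nonneg (covC ν (s j1) (s j2))]
    have heq2 : covA (blessPMF s θ ν) j1 j3 * covA (blessPMF s θ ν) j2 j4
        = covA (blessPMF s θ ν) j1 j4 * covA (blessPMF s θ ν) j2 j3 := by
      rw [hA2 h13, hA2 h24, hA2 h14, hA2 h23, hb]
      ring
    exact (ne_of_lt hgt) heq2.symm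
  -- `s` is surjective, giving a section `js`
  have hsur : ∀ k, ∃ j, s j = k := by
    intro k
    have hk := hchild k
    have hne : (Finset.univ.filter (fun j => s j = k)).Nonempty :=
      Finset.card_pos.mp (by omega)
    obtain ⟨j, hj⟩ := hne
    exact ⟨j, (Finset.mem_filter.mp hj).2⟩
  choose js hjs using hsur
  have ginj : Function.Injective (fun k => sb (js k)) := by
    intro k k' hgk
    have h := hstep _ _ hgk
    rwa [hjs, hjs] at h
  have gbij : Function.Bijective (fun k => sb (js k)) :=
    Finite.injective_iff_bijective.mp ginj
  refine ⟨Equiv.ofBijective _ gbij, fun j => ?_⟩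
  obtain ⟨k'', hk''⟩ := gbij.2 (sb j)
  have hsj : s j = k'' := by
    have hb : sb j = sb (js k'') := hk''.symm
    have h := hstep _ _ hb
    rwa [hjs] at h
  show sb j = sb (js (s j))
  rw [hsj]
  exact hk''.symm
end

section
/- Let (s, θ, ν) be a valid BLESS parameter set in which every latent variable has exactly two observed children, i.e., |s^{-1}(k)| = 2 for every k ∈ {1,…,K}, and fix k ∈ {1,…,K}. Then the following are equivalent: (S1) α_k is not independent of α_{-k} under ν; (S2) the conditional probability tables of the children of α_k are identifiable, meaning that every valid parameter set (s, θ̄, ν̄) with the same parent map s whose joint probability mass function agrees with that of (s, θ, ν) satisfies θ̄^{(j)}_{c|x} = θ^{(j)}_{c|x} for every j with s(j) = k, every c ∈ {1,…,d}, and every x ∈ {0,1}. -/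
/-!
Let `j₁, j₂` be the two children of `α_k` and `A_x = θ^{(j₁)}_{·|x} ⊗ θ^{(j₂)}_{·|x}`. Testing the
pmf against point indicators at `j₁, j₂` and, at every other observed variable, against either the
constant `1` or functionals dual to the two columns of its table (they exist because the columns
differ in the first category), one reads off `π₁ A₁ + π₀ A₀`, with `π` the law of `α_k`, and
`ν(t; 1@k) A₁ + ν(t; 0@k) A₀` for every configuration `t` of `α_{-k}`. For another parameter set
with the same pmf these matrices are also combinations of its `A'₁, A'₀`. If `A'₁` lies outside
the span of `A₁, A₀`, every `(ν(t; 1@k), ν(t; 0@k))` is proportional to `π`, which is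
independence. Otherwise `A'₁, A'₀` are rank-one matrices with stochastic margins in the span of
the linearly independent `A₁, A₀`, so each equals `A₁` or `A₀`, and monotonicity in the first
category matches them up.

Conversely, under independence the pmf sees the children of `α_k` only through the mixture
`π₁ A₁ + π₀ A₀`, which is unchanged when a small mass `β` moves from the first component to the
second while `θ^{(j₁)}_{·|0}` is mixed towards `θ^{(j₁)}_{·|1}` and `θ^{(j₂)}_{·|1}` is pushed
away from `θ^{(j₂)}_{·|0}`.
-/

open Finset

/-- `α_k` is independent of `α_{-k}` under `ν`: for every pattern `α` (equivalently, for
every value `a` of the k-th coordinate and every configuration `t` of the remaining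
coordinates), `ν α` equals the product of the marginal probability that the k-th
coordinate equals `α k` and the marginal probability that the remaining coordinates
agree with those of `α`. -/
def indepAt {K : ℕ} (k : Fin K) (ν : (Fin K → Bool) → ℝ) : Prop :=
  ∀ α : Fin K → Bool,
    ν α = (∑ β : Fin K → Bool, if β k = α k then ν β else 0) *
          (∑ β : Fin K → Bool, if ∀ i, i ≠ k → β i = α i then ν β else 0)

section BooleanPatterns

variable {ι : Type*} [Fintype ι] [DecidableEq ι]

lemma sum_mul_apply_eq_sum_bool (i : ι) (T : Bool → ℝ) (F : (ι → Bool) → ℝ) :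
    ∑ α, T (α i) * F α = ∑ a, T a * ∑ α, if α i = a then F α else 0 := by
  simp_rw [Finset.mul_sum, mul_ite, mul_zero]
  rw [Finset.sum_comm]
  exact Finset.sum_congr rfl fun α _ => (Fintype.sum_ite_eq (α i) fun a => T a * F α).symm

lemma sum_mul_apply_eq_of_update_invariant (i : ι) {G : (ι → Bool) → ℝ}
    (hG : ∀ α a, G (Function.update α i a) = G α) {H H' : Bool → ℝ}
    (hH : ∑ a, H a = ∑ a, H' a) :
    ∑ α, G α * H (α i) = ∑ α, G α * H' (α i) := by
  have key (F : Bool → ℝ) : 2 * ∑ α, G α * F (α i) = (∑ α, G α) * ∑ a, F a := by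
    have hflip : ∑ α, G α * F (α i) = ∑ α, G α * F (!α i) := by
      have hinv : Function.Involutive fun α : ι → Bool => Function.update α i (!α i) :=
        fun α => by simp
      exact Fintype.sum_bijective _ hinv.bijective _ _ fun α => by simp [hG]
    rw [two_mul]
    nth_rewrite 2 [hflip]
    rw [← Finset.sum_add_distrib, Finset.sum_mul]
    refine Finset.sum_congr rfl fun α _ => ?_
    cases α i <;> simp only [Fintype.sum_bool, Bool.not_true, Bool.not_false] <;> ring
  have h := key H
  rw [hH, ← key H'] at h
  linarith

end BooleanPatterns

section LatentMarginals

variable {K : ℕ} (k : Fin K) (ν : (Fin K → Bool) → ℝ)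

def latentMarginal (a : Bool) : ℝ :=
  ∑ β : Fin K → Bool, if β k = a then ν β else 0

def restMarginal (α : Fin K → Bool) : ℝ :=
  ∑ β : Fin K → Bool, if ∀ i, i ≠ k → β i = α i then ν β else 0

lemma indepAt_iff :
    indepAt k ν ↔ ∀ α, ν α = latentMarginal k ν (α k) * restMarginal k ν α :=
  Iff.rfl

lemma sum_mul_apply_eq_sum_latentMarginal (f : Bool → ℝ) :
    ∑ α, ν α * f (α k) = ∑ a, latentMarginal k ν a * f a := by
  simp_rw [mul_comm (ν _), sum_mul_apply_eq_sum_bool k f ν, latentMarginal, mul_comm]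

lemma latentMarginal_true_add_false (hν : ∑ α, ν α = 1) :
    latentMarginal k ν true + latentMarginal k ν false = 1 := by
  have h := sum_mul_apply_eq_sum_latentMarginal k ν fun _ => 1
  simp only [mul_one, Fintype.sum_bool] at h
  rw [← h, hν]

lemma latentMarginal_pos {ν : (Fin K → Bool) → ℝ} (hν : ∀ α, 0 < ν α) (a : Bool) :
    0 < latentMarginal k ν a :=
  Finset.sum_pos' (fun β _ => by split_ifs <;> simp [(hν β).le])
    ⟨fun _ => a, Finset.mem_univ _, by simp [hν]⟩

lemma restMarginal_eq (α : Fin K → Bool) :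
    restMarginal k ν α = ν (Function.update α k true) + ν (Function.update α k false) := by
  have hfiber : ∀ β : Fin K → Bool, (if ∀ i, i ≠ k → β i = α i then ν β else 0)
      = ∑ a, if β = Function.update α k a then ν β else 0 := by
    intro β
    simp_rw [Function.eq_update_iff, ite_and]
    simp
  rw [restMarginal, Finset.sum_congr rfl fun β _ => hfiber β, Finset.sum_comm]
  simp

lemma restMarginal_update (α : Fin K → Bool) (a : Bool) :
    restMarginal k ν (Function.update α k a) = restMarginal k ν α := by
  simp [restMarginal_eq]

lemma indepAt_of_mul_latentMarginal_eq {ν : (Fin K → Bool) → ℝ} (hν : ∑ α, ν α = 1)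
    (h : ∀ t, ν (Function.update t k true) * latentMarginal k ν false
      = ν (Function.update t k false) * latentMarginal k ν true) :
    indepAt k ν := by
  have hπ := latentMarginal_true_add_false k ν hν
  refine (indepAt_iff k ν).2 fun α => ?_
  have hα := Function.update_eq_self k α
  have hα' := h α
  rw [restMarginal_eq]
  cases hk : α k <;> rw [hk] at hα <;> rw [hα] at hα' ⊢
  · linear_combination -hα' - ν α * hπ
  · linear_combination hα' - ν α * hπ

end LatentMarginals

section TwoComponentMixtures

lemma mem_span_pair_or_forall_mul_eq_mul {𝕜 V T : Type*} [Field 𝕜] [AddCommGroup V]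
    [Module 𝕜 V] {A₁ A₀ B₁ B₀ : V} (hA : LinearIndependent 𝕜 ![A₁, A₀]) {π₁ π₀ ρ₁ ρ₀ : 𝕜}
    (hρ₀ : ρ₀ ≠ 0) (hπ : π₁ • A₁ + π₀ • A₀ = ρ₁ • B₁ + ρ₀ • B₀) {u₁ u₀ w₁ w₀ : T → 𝕜}
    (hu : ∀ t, u₁ t • A₁ + u₀ t • A₀ = w₁ t • B₁ + w₀ t • B₀) :
    (B₁ ∈ Submodule.span 𝕜 {A₁, A₀} ∧ B₀ ∈ Submodule.span 𝕜 {A₁, A₀})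
      ∨ ∀ t, u₁ t * π₀ = u₀ t * π₁ := by
  have hA₁ : A₁ ∈ Submodule.span 𝕜 {A₁, A₀} := Submodule.subset_span (by simp)
  have hA₀ : A₀ ∈ Submodule.span 𝕜 {A₁, A₀} := Submodule.subset_span (by simp)
  by_cases hB₁ : B₁ ∈ Submodule.span 𝕜 {A₁, A₀}
  · refine Or.inl ⟨hB₁, ?_⟩
    have hB₀ : B₀ = ρ₀⁻¹ • ((π₁ • A₁ + π₀ • A₀) - ρ₁ • B₁) := by
      rw [hπ, add_sub_cancel_left, smul_smul, inv_mul_cancel₀ hρ₀, one_smul]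
    rw [hB₀]
    exact Submodule.smul_mem _ _ (sub_mem (add_mem (Submodule.smul_mem _ _ hA₁)
      (Submodule.smul_mem _ _ hA₀)) (Submodule.smul_mem _ _ hB₁))
  refine Or.inr fun t => ?_
  have hdiff : (ρ₀ * u₁ t - w₀ t * π₁) • A₁ + (ρ₀ * u₀ t - w₀ t * π₀) • A₀
      = (ρ₀ * w₁ t - w₀ t * ρ₁) • B₁ := by
    linear_combination (norm := module) ρ₀ • hu t - w₀ t • hπ
  have hw : ρ₀ * w₁ t - w₀ t * ρ₁ = 0 := by
    by_contra hne
    refine hB₁ ((Submodule.smul_mem_iff _ hne).1 ?_)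
    rw [← hdiff]
    exact add_mem (Submodule.smul_mem _ _ hA₁) (Submodule.smul_mem _ _ hA₀)
  obtain ⟨h₁, h₀⟩ := LinearIndependent.pair_iff.1 hA _ _ (by rw [hdiff, hw, zero_smul])
  exact mul_left_cancel₀ hρ₀ (by linear_combination π₀ * h₁ - π₁ * h₀)

variable {ι κ : Type*} [Fintype κ]

lemma sum_smul_vecMulVec_add_smul_vecMulVec {a₁ a₀ : ι → ℝ} {b₁ b₀ : κ → ℝ}
    (hb₁ : ∑ l, b₁ l = 1) (hb₀ : ∑ l, b₀ l = 1) (x y : ℝ) (i : ι) :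
    ∑ l, (x • Matrix.vecMulVec a₁ b₁ + y • Matrix.vecMulVec a₀ b₀) i l = x * a₁ i + y * a₀ i := by
  simp [Matrix.vecMulVec_apply, Finset.sum_add_distrib, ← Finset.mul_sum, hb₁, hb₀]

lemma linearIndependent_vecMulVec_pair [Fintype ι] {a : Bool → ι → ℝ} {b : Bool → κ → ℝ}
    (ha : ∀ y, ∑ i, a y i = 1) (hb : ∀ y, ∑ l, b y l = 1) {i₀ : ι}
    (hai : a true i₀ ≠ a false i₀) :
    LinearIndependent ℝ
      ![Matrix.vecMulVec (a true) (b true), Matrix.vecMulVec (a false) (b false)] := by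
  refine LinearIndependent.pair_iff.2 fun x y h => ?_
  have hrow (i : ι) : x * a true i + y * a false i = 0 := by
    rw [← sum_smul_vecMulVec_add_smul_vecMulVec (hb true) (hb false), h]
    simp
  have hsum : x + y = 0 := by
    have := Finset.sum_eq_zero (s := Finset.univ) fun i _ => hrow i
    simpa [Finset.sum_add_distrib, ← Finset.mul_sum, ha] using this
  have hx : x * (a true i₀ - a false i₀) = 0 := by linear_combination hrow i₀ - a false i₀ * hsum
  have hx := (mul_eq_zero.1 hx).resolve_right (sub_ne_zero.2 hai)
  exact ⟨hx, by linarith⟩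

lemma exists_eq_of_vecMulVec_mem_span_pair [Fintype ι]
    {a : Bool → ι → ℝ} {b : Bool → κ → ℝ} (ha : ∀ y, ∑ i, a y i = 1) (hb : ∀ y, ∑ l, b y l = 1)
    {a' : ι → ℝ} {b' : κ → ℝ} (ha' : ∑ i, a' i = 1) (hb' : ∑ l, b' l = 1) {i₀ : ι} {l₀ : κ}
    (hai : a true i₀ ≠ a false i₀) (hbl : b true l₀ ≠ b false l₀)
    (h : Matrix.vecMulVec a' b' ∈ Submodule.span ℝ
      {Matrix.vecMulVec (a true) (b true), Matrix.vecMulVec (a false) (b false)}) :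
    ∃ y, a' = a y ∧ b' = b y := by
  obtain ⟨x, y, hxy⟩ := Submodule.mem_span_pair.1 h
  have hrow (i : ι) : a' i = x * a true i + y * a false i := by
    rw [← sum_smul_vecMulVec_add_smul_vecMulVec (hb true) (hb false), hxy]
    simp [Matrix.vecMulVec_apply, ← Finset.mul_sum, hb']
  have hcol (l : κ) : b' l = x * b true l + y * b false l := by
    have := congrArg (fun M : Matrix ι κ ℝ => ∑ i, M i l) hxy
    simp only [Matrix.add_apply, Matrix.smul_apply, Matrix.vecMulVec_apply, smul_eq_mul,
      Finset.sum_add_distrib, ← Finset.mul_sum, ← Finset.sum_mul, ha, ha', one_mul] at this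
    exact this.symm
  have hsum : x + y = 1 := by
    simpa [hrow, Finset.sum_add_distrib, ← Finset.mul_sum, ha] using ha'
  have hentry := congrFun (congrFun hxy i₀) l₀
  simp only [Matrix.add_apply, Matrix.smul_apply, Matrix.vecMulVec_apply, smul_eq_mul] at hentry
  rw [hrow, hcol] at hentry
  -- once `x + y = 1`, `a' ⊗ b'` differs from the mixture by `-x y (a₁ - a₀) ⊗ (b₁ - b₀)`
  have hxy0 : x * y * ((a true i₀ - a false i₀) * (b true l₀ - b false l₀)) = 0 := by
    linear_combination hentry + (x * a true i₀ * b true l₀ + y * a false i₀ * b false l₀) * hsum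
  rcases mul_eq_zero.1 ((mul_eq_zero.1 hxy0).resolve_right
    (mul_ne_zero (sub_ne_zero.2 hai) (sub_ne_zero.2 hbl))) with hx | hy
  · have hy : y = 1 := by linarith
    exact ⟨false, funext fun i => by simp [hrow, hx, hy], funext fun l => by simp [hcol, hx, hy]⟩
  · have hx : x = 1 := by linarith
    exact ⟨true, funext fun i => by simp [hrow, hx, hy], funext fun l => by simp [hcol, hx, hy]⟩

lemma exists_dual_of_apply_ne [Fintype ι] [DecidableEq ι] {u : ι → Bool → ℝ}
    (hu : ∀ x, ∑ i, u i x = 1) {i₀ : ι} (h : u i₀ true ≠ u i₀ false) :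
    ∃ δ : Bool → ι → ℝ, ∀ x y, ∑ i, u i x * δ y i = if x = y then 1 else 0 := by
  refine ⟨fun y i => ((if i = i₀ then 1 else 0) - u i₀ (!y)) / (u i₀ y - u i₀ (!y)),
    fun x y => ?_⟩
  have hsum : ∑ i, u i x * (((if i = i₀ then 1 else 0) - u i₀ (!y)) / (u i₀ y - u i₀ (!y)))
      = (u i₀ x - u i₀ (!y)) / (u i₀ y - u i₀ (!y)) := by
    simp_rw [mul_div_assoc', ← Finset.sum_div, mul_sub, Finset.sum_sub_distrib, ← Finset.sum_mul,
      hu, mul_ite, mul_one, mul_zero, Finset.sum_ite_eq', Finset.mem_univ, if_true, one_mul]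
  rw [hsum]
  have h' : u i₀ false - u i₀ true ≠ 0 := sub_ne_zero.2 h.symm
  cases x <;> cases y <;> simp [sub_ne_zero.2 h, h']

end TwoComponentMixtures

section BlessModel

variable {K p d : ℕ} (s : Fin p → Fin K) (k : Fin K)

lemma sum_blessPMF_mul_prod (θ : Fin p → Fin d → Bool → ℝ) (ν : (Fin K → Bool) → ℝ)
    (h : Fin p → Fin d → ℝ) :
    ∑ c : Fin p → Fin d, blessPMF s θ ν c * ∏ j, h j (c j)
      = ∑ α : Fin K → Bool, ν α * ∏ j, ∑ x, θ j x (α (s j)) * h j x := by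
  simp only [blessPMF, Finset.sum_mul]
  rw [Finset.sum_comm]
  refine Finset.sum_congr rfl fun α _ => ?_
  rw [Fintype.prod_sum fun j x => θ j x (α (s j)) * h j x, Finset.mul_sum]
  refine Finset.sum_congr rfl fun c _ => ?_
  rw [mul_assoc, ← Finset.prod_mul_distrib]

lemma prod_apply_parent_eq_mul (F : Fin p → Bool → ℝ) (α : Fin K → Bool) :
    ∏ j, F j (α (s j))
      = (∏ j ∈ univ.filter (s · = k), F j (α k)) * ∏ j ∈ univ.filter (s · ≠ k), F j (α (s j)) := by
  rw [← Finset.prod_filter_mul_prod_filter_not univ (fun j => s j = k)]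
  congr 1
  exact Finset.prod_congr rfl fun j hj => by rw [(Finset.mem_filter.1 hj).2]

def restWeight (θ : Fin p → Fin d → Bool → ℝ) (ν : (Fin K → Bool) → ℝ) (g : Fin p → Fin d → ℝ)
    (a : Bool) : ℝ :=
  ∑ α : Fin K → Bool,
    if α k = a then ν α * ∏ j ∈ univ.filter (s · ≠ k), ∑ c, θ j c (α (s j)) * g j c else 0

def pairTensor (θ : Fin p → Fin d → Bool → ℝ) (j₁ j₂ : Fin p) (x : Bool) :
    Matrix (Fin d) (Fin d) ℝ :=
  Matrix.vecMulVec (fun c => θ j₁ c x) (fun c => θ j₂ c x)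

lemma restWeight_const_one {θ : Fin p → Fin d → Bool → ℝ} (hθ : ∀ j x, ∑ c, θ j c x = 1)
    (ν : (Fin K → Bool) → ℝ) (a : Bool) :
    restWeight s k θ ν (fun _ _ => 1) a = latentMarginal k ν a := by
  simp [restWeight, latentMarginal, hθ]

variable {s k} {j₁ j₂ : Fin p}

lemma parent_eq_iff (hk : univ.filter (s · = k) = {j₁, j₂}) (j : Fin p) :
    s j = k ↔ j = j₁ ∨ j = j₂ := by
  simpa using congrArg (j ∈ ·) hk

lemma restWeight_dual (hs : Function.Surjective s) {θ : Fin p → Fin d → Bool → ℝ}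
    {δ : Fin p → Bool → Fin d → ℝ}
    (hδ : ∀ j x y, ∑ c, θ j c x * δ j y c = if x = y then 1 else 0)
    (ν : (Fin K → Bool) → ℝ) (t : Fin K → Bool) (a : Bool) :
    restWeight s k θ ν (fun j => δ j (t (s j))) a = ν (Function.update t k a) := by
  have hrest (α : Fin K → Bool) :
      (∀ j ∈ univ.filter (s · ≠ k), α (s j) = t (s j)) ↔ ∀ i, i ≠ k → α i = t i := by
    refine ⟨fun H i hi => ?_, fun H j hj => H _ (Finset.mem_filter.1 hj).2⟩
    obtain ⟨j, rfl⟩ := hs i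
    exact H j (by simpa using hi)
  simp_rw [restWeight, hδ, Finset.prod_boole, hrest, mul_ite, mul_one, mul_zero, ← ite_and,
    ← Function.eq_update_iff]
  simp

lemma sum_blessPMF_mul_prod_update (hk : univ.filter (s · = k) = {j₁, j₂}) (hne : j₁ ≠ j₂)
    (θ : Fin p → Fin d → Bool → ℝ) (ν : (Fin K → Bool) → ℝ) (g : Fin p → Fin d → ℝ)
    (c₁ c₂ : Fin d) :
    ∑ c : Fin p → Fin d, blessPMF s θ ν c *
        ∏ j, Function.update (Function.update g j₁ (Pi.single c₁ 1)) j₂ (Pi.single c₂ 1) j (c j)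
      = ∑ a, θ j₁ c₁ a * θ j₂ c₂ a * restWeight s k θ ν g a := by
  set h := Function.update (Function.update g j₁ (Pi.single c₁ 1)) j₂ (Pi.single c₂ 1)
  have hchildren (a : Bool) :
      ∏ j ∈ univ.filter (s · = k), ∑ x, θ j x a * h j x = θ j₁ c₁ a * θ j₂ c₂ a := by
    rw [hk, Finset.prod_pair hne]
    simp [h, hne, Pi.single_apply]
  have hrest : ∀ j ∈ univ.filter (s · ≠ k), h j = g j := by
    intro j hj
    have hj := mt (parent_eq_iff hk j).2 (Finset.mem_filter.1 hj).2
    simp only [not_or] at hj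
    simp [h, hj.1, hj.2]
  rw [sum_blessPMF_mul_prod]
  calc ∑ α, ν α * ∏ j, ∑ x, θ j x (α (s j)) * h j x
      = ∑ α, θ j₁ c₁ (α k) * θ j₂ c₂ (α k) *
          (ν α * ∏ j ∈ univ.filter (s · ≠ k), ∑ x, θ j x (α (s j)) * g j x) := by
        refine Finset.sum_congr rfl fun α _ => ?_
        rw [prod_apply_parent_eq_mul s k (fun j a => ∑ x, θ j x a * h j x), hchildren,
          Finset.prod_congr rfl fun j hj => by rw [hrest j hj]]
        ring
    _ = _ := sum_mul_apply_eq_sum_bool k (fun a => θ j₁ c₁ a * θ j₂ c₂ a) _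

lemma sum_restWeight_smul_pairTensor_eq (hk : univ.filter (s · = k) = {j₁, j₂})
    (hne : j₁ ≠ j₂) {θ θ' : Fin p → Fin d → Bool → ℝ} {ν ν' : (Fin K → Bool) → ℝ}
    (hpmf : ∀ c, blessPMF s θ' ν' c = blessPMF s θ ν c) (g : Fin p → Fin d → ℝ) :
    ∑ a, restWeight s k θ ν g a • pairTensor θ j₁ j₂ a
      = ∑ a, restWeight s k θ' ν' g a • pairTensor θ' j₁ j₂ a := by
  ext c₁ c₂
  simp only [Matrix.sum_apply, Matrix.smul_apply, pairTensor, Matrix.vecMulVec_apply, smul_eq_mul]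
  simp only [mul_comm (restWeight _ _ _ _ _ _)]
  rw [← sum_blessPMF_mul_prod_update hk hne θ ν, ← sum_blessPMF_mul_prod_update hk hne θ' ν']
  simp only [hpmf]

end BlessModel

section Identifiability

variable {K p d : ℕ} {s : Fin p → Fin K} {k : Fin K} {j₁ j₂ : Fin p}
  {θ θ' : Fin p → Fin d → Bool → ℝ} {ν ν' : (Fin K → Bool) → ℝ} {i₀ : Fin d}

lemma pairTensor_mem_span_of_not_indepAt (hs : Function.Surjective s)
    (hk : univ.filter (s · = k) = {j₁, j₂}) (hne : j₁ ≠ j₂) (hval : BlessValid θ ν)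
    (hval' : BlessValid θ' ν') (hpmf : ∀ c, blessPMF s θ' ν' c = blessPMF s θ ν c)
    (hi₀ : (i₀ : ℕ) + 1 < d) (hdep : ¬ indepAt k ν) (x : Bool) :
    pairTensor θ' j₁ j₂ x
      ∈ Submodule.span ℝ {pairTensor θ j₁ j₂ true, pairTensor θ j₁ j₂ false} := by
  have hA : LinearIndependent ℝ ![pairTensor θ j₁ j₂ true, pairTensor θ j₁ j₂ false] :=
    linearIndependent_vecMulVec_pair (a := fun x c => θ j₁ c x) (b := fun x c => θ j₂ c x)
      (hval.theta_sum j₁) (hval.theta_sum j₂) (hval.theta_mono j₁ i₀ hi₀).ne'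
  have hmarg := sum_restWeight_smul_pairTensor_eq hk hne hpmf fun _ _ => 1
  simp only [restWeight_const_one s k hval.theta_sum, restWeight_const_one s k hval'.theta_sum,
    Fintype.sum_bool] at hmarg
  choose δ hδ using fun j => exists_dual_of_apply_ne (hval.theta_sum j)
    (hval.theta_mono j i₀ hi₀).ne'
  have hslice (t : Fin K → Bool) :=
    sum_restWeight_smul_pairTensor_eq hk hne hpmf fun j => δ j (t (s j))
  simp only [restWeight_dual hs hδ, Fintype.sum_bool] at hslice
  rcases mem_span_pair_or_forall_mul_eq_mul hA (latentMarginal_pos k hval'.nu_pos false).ne'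
    hmarg hslice with ⟨h₁, h₀⟩ | hprop
  · cases x
    exacts [h₀, h₁]
  · exact absurd (indepAt_of_mul_latentMarginal_eq k hval.nu_sum hprop) hdep

lemma tables_eq_of_pairTensor_mem_span (hval : BlessValid θ ν) (hval' : BlessValid θ' ν')
    (hi₀ : (i₀ : ℕ) + 1 < d)
    (hspan : ∀ x, pairTensor θ' j₁ j₂ x
      ∈ Submodule.span ℝ {pairTensor θ j₁ j₂ true, pairTensor θ j₁ j₂ false}) (x : Bool) :
    (fun c => θ' j₁ c x) = (fun c => θ j₁ c x) ∧ (fun c => θ' j₂ c x) = (fun c => θ j₂ c x) := by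
  have hcols (z : Bool) : ∃ y, (fun c => θ' j₁ c z) = (fun c => θ j₁ c y)
      ∧ (fun c => θ' j₂ c z) = (fun c => θ j₂ c y) :=
    exists_eq_of_vecMulVec_mem_span_pair (a := fun y c => θ j₁ c y) (b := fun y c => θ j₂ c y)
      (hval.theta_sum j₁) (hval.theta_sum j₂) (hval'.theta_sum j₁ z) (hval'.theta_sum j₂ z)
      (hval.theta_mono j₁ i₀ hi₀).ne' (hval.theta_mono j₂ i₀ hi₀).ne' (hspan z)
  obtain ⟨y₁, h₁⟩ := hcols true
  obtain ⟨y₀, h₀⟩ := hcols false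
  -- monotonicity at the first category pins down which component is which
  have hmono := hval.theta_mono j₁ i₀ hi₀
  have hmono' := hval'.theta_mono j₁ i₀ hi₀
  rw [congrFun h₁.1 i₀, congrFun h₀.1 i₀] at hmono'
  have hy : y₁ = true ∧ y₀ = false := by
    cases y₁ <;> cases y₀ <;>
      first | exact ⟨rfl, rfl⟩ | exact absurd hmono' (lt_irrefl _) | linarith
  obtain ⟨rfl, rfl⟩ := hy
  cases x
  exacts [h₀, h₁]

end Identifiability

section ValidTables

variable {d : ℕ}

structure IsValidTable (t : Fin d → Bool → ℝ) : Prop where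
  pos : ∀ c x, 0 < t c x
  lt_one : ∀ c x, t c x < 1
  sum_eq_one : ∀ x, ∑ c, t c x = 1
  mono : ∀ c : Fin d, (c : ℕ) + 1 < d → t c false < t c true

lemma BlessValid.isValidTable {K p : ℕ} {θ : Fin p → Fin d → Bool → ℝ}
    {ν : (Fin K → Bool) → ℝ} (h : BlessValid θ ν) (j : Fin p) : IsValidTable (θ j) :=
  ⟨h.theta_pos j, h.theta_lt_one j, h.theta_sum j, h.theta_mono j⟩

lemma blessValid_of_isValidTable {K p : ℕ} {θ : Fin p → Fin d → Bool → ℝ}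
    {ν : (Fin K → Bool) → ℝ} (hθ : ∀ j, IsValidTable (θ j)) (hν₀ : ∀ α, 0 < ν α)
    (hν₁ : ∑ α, ν α = 1) : BlessValid θ ν :=
  ⟨fun j => (hθ j).pos, fun j => (hθ j).lt_one, fun j => (hθ j).sum_eq_one,
    fun j => (hθ j).mono, hν₀, hν₁⟩

open Filter Topology in
lemma exists_pos_forall_lt {ι : Type*} [Finite ι] {f : ι → ℝ} (hf : ∀ i, 0 < f i) :
    ∃ β, 0 < β ∧ ∀ i, β < f i := by
  obtain ⟨β, hβf, hβ⟩ := (((eventually_all.2 fun i => eventually_lt_nhds (hf i)).filter_mono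
    nhdsWithin_le_nhds).and (self_mem_nhdsWithin (s := Set.Ioi (0 : ℝ)))).exists
  exact ⟨β, hβ, hβf⟩

-- With columns `a, b` of the table at `j₁` and `c, e` at `j₂`, the new columns
-- `b' = (π₀ b + β a) / (π₀ + β)` and `c' = (π₁ c - β e) / (π₁ - β)` satisfy
-- `(π₁ - β) a ⊗ c' + (π₀ + β) b' ⊗ e = π₁ a ⊗ c + π₀ b ⊗ e`.
noncomputable def mixFalseColumn (t : Fin d → Bool → ℝ) (π₀ β : ℝ) : Fin d → Bool → ℝ :=
  fun c x => if x then t c true else (π₀ * t c false + β * t c true) / (π₀ + β)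

noncomputable def extrapolateTrueColumn (t : Fin d → Bool → ℝ) (π₁ β : ℝ) :
    Fin d → Bool → ℝ :=
  fun c x => if x then (π₁ * t c true - β * t c false) / (π₁ - β) else t c false

variable {t : Fin d → Bool → ℝ}

lemma IsValidTable.mixFalseColumn (ht : IsValidTable t) {π₀ β : ℝ} (hπ₀ : 0 < π₀)
    (hβ : 0 < β) : IsValidTable (mixFalseColumn t π₀ β) := by
  obtain ⟨pos, lt_one, sum, mono⟩ := ht
  have hπβ : 0 < π₀ + β := add_pos hπ₀ hβ
  refine ⟨fun c x => ?_, fun c x => ?_, fun x => ?_, fun c hc => ?_⟩ <;>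
    simp only [_root_.mixFalseColumn]
  · cases x
    · exact div_pos (by nlinarith [pos c false, pos c true]) hπβ
    · exact pos c true
  · cases x
    · exact (div_lt_one hπβ).2 (by nlinarith [lt_one c false, lt_one c true])
    · exact lt_one c true
  · cases x
    · simp only [Bool.false_eq_true, if_false]
      rw [← Finset.sum_div, Finset.sum_add_distrib, ← Finset.mul_sum, ← Finset.mul_sum, sum, sum,
        mul_one, mul_one, div_self hπβ.ne']
    · exact sum true
  · simp only [if_true, Bool.false_eq_true, if_false]
    exact (div_lt_iff₀ hπβ).2 (by nlinarith [mono c hc])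

lemma IsValidTable.extrapolateTrueColumn (ht : IsValidTable t) {π₁ β : ℝ} (hβ : 0 < β)
    (hβc : ∀ c, β < π₁ * t c true ∧ β < π₁ * (1 - t c true)) :
    IsValidTable (extrapolateTrueColumn t π₁ β) := by
  obtain ⟨pos, lt_one, sum, mono⟩ := ht
  have hπβ : 0 < π₁ - β := by
    obtain ⟨c, -⟩ := Finset.nonempty_of_sum_ne_zero ((sum true).trans_ne one_ne_zero)
    nlinarith [hβc c, pos c true]
  refine ⟨fun c x => ?_, fun c x => ?_, fun x => ?_, fun c hc => ?_⟩ <;>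
    simp only [_root_.extrapolateTrueColumn]
  · cases x
    · exact pos c false
    · exact div_pos (by nlinarith [hβc c, lt_one c false, pos c false]) hπβ
  · cases x
    · exact lt_one c false
    · exact (div_lt_one hπβ).2 (by nlinarith [hβc c, pos c false])
  · cases x
    · exact sum false
    · simp only [if_true]
      rw [← Finset.sum_div, Finset.sum_sub_distrib, ← Finset.mul_sum, ← Finset.mul_sum, sum, sum,
        mul_one, mul_one, div_self hπβ.ne']
  · simp only [if_true, Bool.false_eq_true, if_false]
    exact (lt_div_iff₀ hπβ).2 (by nlinarith [mono c hc])

end ValidTables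

section MassTransfer

variable {K p d : ℕ} {s : Fin p → Fin K} {k : Fin K} {j₁ j₂ : Fin p}
  {θ θ' : Fin p → Fin d → Bool → ℝ} {ν ν' : (Fin K → Bool) → ℝ}

noncomputable def transferRatio (k : Fin K) (ν : (Fin K → Bool) → ℝ) (β : ℝ) (a : Bool) : ℝ :=
  (latentMarginal k ν a + if a then -β else β) / latentMarginal k ν a

lemma blessPMF_eq_of_indepAt (hind : indepAt k ν) {r : Bool → ℝ}
    (hθ : ∀ j, s j ≠ k → θ' j = θ j) (hν : ∀ α, ν' α = ν α * r (α k))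
    (hmix : ∀ c : Fin p → Fin d, ∑ a, latentMarginal k ν a * r a *
        ∏ j ∈ univ.filter (s · = k), θ' j (c j) a
      = ∑ a, latentMarginal k ν a * ∏ j ∈ univ.filter (s · = k), θ j (c j) a)
    (c : Fin p → Fin d) :
    blessPMF s θ' ν' c = blessPMF s θ ν c := by
  set R : (Fin K → Bool) → ℝ := fun α => ∏ j ∈ univ.filter (s · ≠ k), θ j (c j) (α (s j))
  have hR (α : Fin K → Bool) (a : Bool) : R (Function.update α k a) = R α :=
    Finset.prod_congr rfl fun j hj => by rw [Function.update_of_ne (Finset.mem_filter.1 hj).2]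
  have hexpand (θ'' : Fin p → Fin d → Bool → ℝ) (ν'' : (Fin K → Bool) → ℝ) (r'' : Bool → ℝ)
      (hθ'' : ∀ j, s j ≠ k → θ'' j = θ j) (hν'' : ∀ α, ν'' α = ν α * r'' (α k)) :
      blessPMF s θ'' ν'' c = ∑ α, restMarginal k ν α * R α * (latentMarginal k ν (α k) * r'' (α k)
        * ∏ j ∈ univ.filter (s · = k), θ'' j (c j) (α k)) := by
    refine Finset.sum_congr rfl fun α _ => ?_
    have hrest : ∏ j ∈ univ.filter (s · ≠ k), θ'' j (c j) (α (s j)) = R α :=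
      Finset.prod_congr rfl fun j hj => by rw [hθ'' j (Finset.mem_filter.1 hj).2]
    rw [hν'', (indepAt_iff k ν).1 hind α, prod_apply_parent_eq_mul s k fun j a => θ'' j (c j) a,
      hrest]
    ring
  rw [hexpand θ' ν' r hθ hν, hexpand θ ν (fun _ => 1) (fun _ _ => rfl) (by simp)]
  refine sum_mul_apply_eq_of_update_invariant k (G := fun α => restMarginal k ν α * R α)
    (H := fun a => latentMarginal k ν a * r a * ∏ j ∈ univ.filter (s · = k), θ' j (c j) a)
    (H' := fun a => latentMarginal k ν a * 1 * ∏ j ∈ univ.filter (s · = k), θ j (c j) a)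
    (fun α a => by rw [restMarginal_update, hR]) ?_
  simpa using hmix c

lemma latentMarginal_mul_transferRatio (hν : ∀ α, 0 < ν α) (β : ℝ) (a : Bool) :
    latentMarginal k ν a * transferRatio k ν β a
      = latentMarginal k ν a + if a then -β else β :=
  mul_div_cancel₀ _ (latentMarginal_pos k hν a).ne'

lemma exists_blessValid_ne_of_indepAt (hk : univ.filter (s · = k) = {j₁, j₂}) (hne : j₁ ≠ j₂)
    (hval : BlessValid θ ν) (hind : indepAt k ν) {i₀ : Fin d} (hi₀ : (i₀ : ℕ) + 1 < d) :
    ∃ θ' ν', BlessValid θ' ν' ∧ (∀ c, blessPMF s θ' ν' c = blessPMF s θ ν c)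
      ∧ θ' j₁ i₀ false ≠ θ j₁ i₀ false := by
  set π₁ := latentMarginal k ν true
  set π₀ := latentMarginal k ν false
  have hπ₁ : 0 < π₁ := latentMarginal_pos k hval.nu_pos true
  have hπ₀ : 0 < π₀ := latentMarginal_pos k hval.nu_pos false
  have hπ := latentMarginal_true_add_false k ν hval.nu_sum
  obtain ⟨β, hβ, hβc⟩ := exists_pos_forall_lt fun c => lt_min
    (mul_pos hπ₁ (hval.theta_pos j₂ c true)) (mul_pos hπ₁ (sub_pos.2 (hval.theta_lt_one j₂ c true)))
  have hβc (c : Fin d) := lt_min_iff.1 (hβc c)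
  have hβπ₁ : β < π₁ := by nlinarith [hβc i₀, hval.theta_lt_one j₂ i₀ true]
  set θ' := Function.update (Function.update θ j₁ (mixFalseColumn (θ j₁) π₀ β)) j₂
    (extrapolateTrueColumn (θ j₂) π₁ β)
  have hθ'₁ : θ' j₁ = mixFalseColumn (θ j₁) π₀ β := by simp [θ', hne]
  have hθ'₂ : θ' j₂ = extrapolateTrueColumn (θ j₂) π₁ β := by simp [θ']
  have hθ' (j : Fin p) : IsValidTable (θ' j) := by
    by_cases h₂ : j = j₂
    · rw [h₂, hθ'₂]; exact (hval.isValidTable j₂).extrapolateTrueColumn hβ hβc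
    by_cases h₁ : j = j₁
    · rw [h₁, hθ'₁]; exact (hval.isValidTable j₁).mixFalseColumn hπ₀ hβ
    simpa [θ', h₁, h₂] using hval.isValidTable j
  have hratio := latentMarginal_mul_transferRatio (k := k) hval.nu_pos β
  refine ⟨θ', fun α => ν α * transferRatio k ν β (α k),
    blessValid_of_isValidTable hθ' (fun α => ?_) ?_,
    blessPMF_eq_of_indepAt hind (fun j hj => ?_) (fun _ => rfl) (fun c => ?_), ?_⟩
  · refine mul_pos (hval.nu_pos α) (div_pos ?_ (latentMarginal_pos k hval.nu_pos _))
    cases α k <;> simp only [if_true, Bool.false_eq_true, if_false] <;> linarith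
  · simp only [sum_mul_apply_eq_sum_latentMarginal, hratio, Fintype.sum_bool, if_true,
      Bool.false_eq_true, if_false]
    linarith
  · have hj := mt (parent_eq_iff hk j).2 hj
    simp only [not_or] at hj
    simp [θ', hj.1, hj.2]
  · simp only [hk, Finset.prod_pair hne, Fintype.sum_bool, hratio, hθ'₁, hθ'₂, mixFalseColumn,
      extrapolateTrueColumn, if_true, Bool.false_eq_true, if_false]
    field_simp [(sub_pos.2 hβπ₁).ne', (add_pos hπ₀ hβ).ne']
    ring
  · rw [hθ'₁]
    simp only [mixFalseColumn, Bool.false_eq_true, if_false]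
    rw [Ne, div_eq_iff (add_pos hπ₀ hβ).ne']
    nlinarith [hval.theta_mono j₁ i₀ hi₀]

end MassTransfer

/-- fine-grained blessing of dependence: if every latent variable has
exactly two observed children, then for a fixed `k`, the latent variable `α_k` is not
independent of the remaining latent variables under `ν` if and only if the conditional
probability tables of the children of `α_k` are identifiable. -/
theorem bless_child_tables_identifiable_iff_dependent {K p d : ℕ} (hd : 2 ≤ d)
    (s : Fin p → Fin K) (θ : Fin p → Fin d → Bool → ℝ) (ν : (Fin K → Bool) → ℝ)
    (hval : BlessValid θ ν)
    (hchild : ∀ k, (Finset.univ.filter (fun j => s j = k)).card = 2)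
    (k : Fin K) :
    (¬ indepAt k ν
      ↔ (∀ (θ' : Fin p → Fin d → Bool → ℝ) (ν' : (Fin K → Bool) → ℝ),
          BlessValid θ' ν' → (∀ c, blessPMF s θ' ν' c = blessPMF s θ ν c) →
          ∀ j, s j = k → ∀ c x, θ' j c x = θ j c x)) := by
  obtain ⟨j₁, j₂, hne, hk⟩ := Finset.card_eq_two.1 (hchild k)
  have hs : Function.Surjective s := fun l => by
    obtain ⟨j, hj⟩ := Finset.card_pos.1 ((hchild l).symm ▸ two_pos : 0 < _)
    exact ⟨j, (Finset.mem_filter.1 hj).2⟩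
  have hi₀ : ((⟨0, by omega⟩ : Fin d) : ℕ) + 1 < d := by simp; omega
  constructor
  · intro hdep θ' ν' hval' hpmf j hj c x
    have hcols := tables_eq_of_pairTensor_mem_span hval hval' hi₀
      (pairTensor_mem_span_of_not_indepAt hs hk hne hval hval' hpmf hi₀ hdep) x
    rcases (parent_eq_iff hk j).1 hj with rfl | rfl
    exacts [congrFun hcols.1 c, congrFun hcols.2 c]
  · intro hid hind
    obtain ⟨θ', ν', hval', hpmf, hne'⟩ := exists_blessValid_ne_of_indepAt hk hne hval hind hi₀
    exact hne' (hid θ' ν' hval' hpmf j₁ ((parent_eq_iff hk j₁).2 (Or.inl rfl)) _ _)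
end

section
/- Let (s, θ, ν) be a valid BLESS parameter set in which every latent variable has at least three observed children, i.e., |s^{-1}(k)| ≥ 3 for every k ∈ {1,…,K}. Then the model is strictly identifiable regardless of the dependence among the latent variables: for every valid BLESS parameter set (s̄, θ̄, ν̄) (same K, p, d) whose joint probability mass function agrees with that of (s, θ, ν), there exists a permutation σ of {1,…,K} such that s̄(j) = σ(s(j)) for all j ∈ {1,…,p}, θ̄^{(j)}_{c|x} = θ^{(j)}_{c|x} for all j, c, x, and ν̄_α = ν_{α∘σ} for all α ∈ {0,1}^K, where (α∘σ)_k = α_{σ(k)}. -/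
open Finset

/-!
Split the observed variables into three groups, each containing a child of every latent
variable. Given `α` the groups are independent, so the joint law is the three-way tensor
`∑_α ν_α A₁(α) ⊗ A₂(α) ⊗ A₃(α)`, where `A_i(α)` is the law of group `i` given `α`. Each `A_i`
has linearly independent rows: for a child `j` of every latent `k` the two columns
`θ^{(j)}_{·|0}, θ^{(j)}_{·|1}` are distinct (monotonicity), hence independent, and the row of
`α` is, on these children, the tensor product of the columns selected by `α`.

For a decomposition with full-row-rank, row-stochastic factors and nonzero weights,
contracting the tensor against dual vectors of two factors expresses the rows of the third
factor `A` through the rows of the competing factor `B`; squareness makes the transition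
matrix `P = B V` invertible with `B = P A`, and contracting once more shows that each row of
`P` is a standard basis vector. So the competing parameters give the same factors and weights
up to a permutation `π` of `{0,1}^K`. Reading off one coordinate of the factors gives
`θ̄^{(j)}_{c|α_{s̄(j)}} = θ^{(j)}_{c|(π α)_{s(j)}}`; monotonicity pins down the labels of the
two latent states, so `θ̄ = θ` and `π` is induced by a permutation of the latent variables.
-/

open Matrix

section LinearAlgebra

variable {𝕜 X I : Type*} [Field 𝕜]

lemma mulVec_col {Y : Type*} [Fintype I] (A : Matrix X I 𝕜) (V : Matrix I Y 𝕜) (y : Y) :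
    A *ᵥ V.col y = (A * V).col y :=
  rfl

lemma mul_eq_one_and_eq_mul_of_eq_mul [Fintype X] [DecidableEq X] [Fintype I]
    {A B : Matrix X I 𝕜} {V : Matrix I X 𝕜} {M : Matrix X X 𝕜} (hV : A * V = 1)
    (hA : A = M * B) : B * V * M = 1 ∧ B = B * V * A := by
  have hPM : B * V * M = 1 := mul_eq_one_comm.mp (by rw [← Matrix.mul_assoc, ← hA, hV])
  exact ⟨hPM, by rw [hA, ← Matrix.mul_assoc, hPM, Matrix.one_mul]⟩

lemma sum_row_eq_one_of_eq_mul [Fintype X] [Fintype I] {P : Matrix X X 𝕜}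
    {A B : Matrix X I 𝕜} (hB : B = P * A) (hA : A *ᵥ 1 = 1) (hB₁ : B *ᵥ 1 = 1) (x : X) :
    ∑ y, P x y = 1 := by
  rw [hB, ← mulVec_mulVec, hA] at hB₁
  simpa [mulVec, dotProduct] using congrFun hB₁ x

lemma exists_eq_single_of_mul_eq_zero [Fintype X] [DecidableEq X] {f g : X → 𝕜}
    (hf : ∑ x, f x = 1) (hg : ∑ x, g x = 1) (h : ∀ x y, x ≠ y → f x * g y = 0) :
    ∃ x, f = Pi.single x 1 ∧ g = Pi.single x 1 := by
  obtain ⟨x, -, hfx⟩ := exists_ne_zero_of_sum_ne_zero (hf ▸ one_ne_zero)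
  have hg' : ∀ y, y ≠ x → g y = 0 := fun y hy =>
    (mul_eq_zero.mp (h x y (Ne.symm hy))).resolve_left hfx
  have hgx : g x = 1 := by rwa [sum_eq_single x (fun y _ => hg' y) (by simp)] at hg
  have hf' : ∀ y, y ≠ x → f y = 0 := fun y hy =>
    (mul_eq_zero.mp (h y x hy)).resolve_right (by simp [hgx])
  have hfx : f x = 1 := by rwa [sum_eq_single x (fun y _ => hf' y) (by simp)] at hf
  refine ⟨x, funext fun y => ?_, funext fun y => ?_⟩ <;>
    rcases eq_or_ne y x with rfl | hy <;> simp [*]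

lemma mul_apply_of_row_eq_single [Fintype X] [DecidableEq X] {Y : Type*} {P : Matrix Y X 𝕜}
    {x : X} {y : Y} (hP : P y = Pi.single x 1) (A : Matrix X I 𝕜) : (P * A) y = A x := by
  ext a
  rw [mul_apply', hP, single_dotProduct, one_mul]

lemma injective_of_rows_single_of_mul_eq_one [Fintype X] [DecidableEq X] {P M : Matrix X X 𝕜}
    {π : X → X} (hP : ∀ x, P x = Pi.single (π x) 1) (h : P * M = 1) :
    Function.Injective π ∧ ∀ x, M (π x) x = 1 := by
  have hM : ∀ x, M (π x) = (1 : Matrix X X 𝕜) x := fun x => by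
    rw [← mul_apply_of_row_eq_single (hP x) M, h]
  refine ⟨fun x x' hxx' => ?_, fun x => by simp [hM]⟩
  have := congrFun (hM x') x
  rw [← hxx', hM x, one_apply_eq, one_apply] at this
  by_contra hne
  simp [Ne.symm hne] at this

end LinearAlgebra

section TripleSum

variable {𝕜 X I₁ I₂ I₃ : Type*} [Field 𝕜] [Fintype X]

def tripleSum (w : X → 𝕜) (A₁ : Matrix X I₁ 𝕜) (A₂ : Matrix X I₂ 𝕜) (A₃ : Matrix X I₃ 𝕜)
    (a : I₁) (b : I₂) (c : I₃) : 𝕜 :=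
  ∑ x, w x * A₁ x a * A₂ x b * A₃ x c

lemma tripleSum_rotate (w : X → 𝕜) (A₁ : Matrix X I₁ 𝕜) (A₂ : Matrix X I₂ 𝕜)
    (A₃ : Matrix X I₃ 𝕜) (a : I₁) (b : I₂) (c : I₃) :
    tripleSum w A₂ A₃ A₁ b c a = tripleSum w A₁ A₂ A₃ a b c :=
  sum_congr rfl fun _ _ => by ring

variable [Fintype I₁] [Fintype I₂] [Fintype I₃]

lemma sum_mul_tripleSum (w : X → 𝕜) (A₁ : Matrix X I₁ 𝕜) (A₂ : Matrix X I₂ 𝕜)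
    (A₃ : Matrix X I₃ 𝕜) (t₁ : I₁ → 𝕜) (t₂ : I₂ → 𝕜) (t₃ : I₃ → 𝕜) :
    ∑ c, ∑ b, ∑ a, t₁ a * t₂ b * t₃ c * tripleSum w A₁ A₂ A₃ a b c
      = ∑ x, w x * (A₁ *ᵥ t₁) x * (A₂ *ᵥ t₂) x * (A₃ *ᵥ t₃) x := by
  simp only [tripleSum, mulVec, dotProduct, mul_sum, sum_mul]
  simp_rw [sum_comm (s := (univ : Finset I₁)) (t := (univ : Finset X)),
    sum_comm (s := (univ : Finset I₂)) (t := (univ : Finset X)),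
    sum_comm (s := (univ : Finset I₃)) (t := (univ : Finset X))]
  exact sum_congr rfl fun _ _ => sum_congr rfl fun _ _ => sum_congr rfl fun _ _ =>
    sum_congr rfl fun _ _ => by ring

variable {w w' : X → 𝕜} {A₁ B₁ : Matrix X I₁ 𝕜} {A₂ B₂ : Matrix X I₂ 𝕜}
  {A₃ B₃ : Matrix X I₃ 𝕜}

lemma sum_mulVec_eq_of_tripleSum_eq (hT : tripleSum w A₁ A₂ A₃ = tripleSum w' B₁ B₂ B₃)
    (t₁ : I₁ → 𝕜) (t₂ : I₂ → 𝕜) (t₃ : I₃ → 𝕜) :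
    ∑ x, w x * (A₁ *ᵥ t₁) x * (A₂ *ᵥ t₂) x * (A₃ *ᵥ t₃) x
      = ∑ x, w' x * (B₁ *ᵥ t₁) x * (B₂ *ᵥ t₂) x * (B₃ *ᵥ t₃) x := by
  rw [← sum_mul_tripleSum, ← sum_mul_tripleSum, hT]

variable [DecidableEq X]

lemma eq_mul_of_tripleSum_eq (hT : tripleSum w A₁ A₂ A₃ = tripleSum w' B₁ B₂ B₃)
    {V₂ : Matrix I₂ X 𝕜} {V₃ : Matrix I₃ X 𝕜} (hV₂ : A₂ * V₂ = 1) (hV₃ : A₃ * V₃ = 1)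
    (hw : ∀ x, w x ≠ 0) :
    A₁ = of (fun y x => w' x * (B₂ * V₂) x y * (B₃ * V₃) x y / w y) * B₁ := by
  classical
  ext y a
  have h := sum_mulVec_eq_of_tripleSum_eq hT (Pi.single a 1) (V₂.col y) (V₃.col y)
  simp only [mulVec_single_one, mulVec_col, hV₂, hV₃, col_apply, one_apply, mul_ite, mul_one,
    mul_zero, sum_ite_eq', mem_univ, if_true] at h
  rw [mul_apply, eq_div_of_mul_eq (hw y) ((mul_comm _ _).trans h), sum_div]
  exact sum_congr rfl fun x _ => by rw [of_apply]; ring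

lemma mul_eq_zero_of_tripleSum_eq (hT : tripleSum w A₁ A₂ A₃ = tripleSum w' B₁ B₂ B₃)
    {R : Matrix I₁ X 𝕜} {V₂ : Matrix I₂ X 𝕜} {V₃ : Matrix I₃ X 𝕜} (hR : B₁ * R = 1)
    (hV₂ : A₂ * V₂ = 1) (hV₃ : A₃ * V₃ = 1) (hw' : ∀ x, w' x ≠ 0) (x y z : X)
    (hyz : y ≠ z) : (B₂ * V₂) x y * (B₃ * V₃) x z = 0 := by
  have h := sum_mulVec_eq_of_tripleSum_eq hT (R.col x) (V₂.col y) (V₃.col z)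
  simp only [mulVec_col, hR, hV₂, hV₃, col_apply, one_apply, mul_ite, mul_one, mul_zero,
    sum_ite_eq', mem_univ, if_true] at h
  simpa [Ne.symm hyz, hw'] using h.symm

theorem exists_perm_of_tripleSum_eq (hT : tripleSum w A₁ A₂ A₃ = tripleSum w' B₁ B₂ B₃)
    {V₁ : Matrix I₁ X 𝕜} {V₂ : Matrix I₂ X 𝕜} {V₃ : Matrix I₃ X 𝕜}
    (hV₁ : A₁ * V₁ = 1) (hV₂ : A₂ * V₂ = 1) (hV₃ : A₃ * V₃ = 1)
    (hA₁ : A₁ *ᵥ 1 = 1) (hA₂ : A₂ *ᵥ 1 = 1) (hA₃ : A₃ *ᵥ 1 = 1)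
    (hB₁ : B₁ *ᵥ 1 = 1) (hB₂ : B₂ *ᵥ 1 = 1) (hB₃ : B₃ *ᵥ 1 = 1)
    (hw : ∀ x, w x ≠ 0) (hw' : ∀ x, w' x ≠ 0) :
    ∃ π : Equiv.Perm X, ∀ x,
      B₁ x = A₁ (π x) ∧ B₂ x = A₂ (π x) ∧ B₃ x = A₃ (π x) ∧ w' x = w (π x) := by
  have hT₂ : tripleSum w A₂ A₃ A₁ = tripleSum w' B₂ B₃ B₁ := by
    ext b c a; rw [tripleSum_rotate w A₁, tripleSum_rotate w' B₁, hT]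
  have hT₃ : tripleSum w A₃ A₁ A₂ = tripleSum w' B₃ B₁ B₂ := by
    ext c a b; rw [tripleSum_rotate w A₂, tripleSum_rotate w' B₂, hT₂]
  obtain ⟨hPM₁, hBPA₁⟩ :=
    mul_eq_one_and_eq_mul_of_eq_mul hV₁ (eq_mul_of_tripleSum_eq hT hV₂ hV₃ hw)
  obtain ⟨hPM₂, hBPA₂⟩ :=
    mul_eq_one_and_eq_mul_of_eq_mul hV₂ (eq_mul_of_tripleSum_eq hT₂ hV₃ hV₁ hw)
  obtain ⟨-, hBPA₃⟩ :=
    mul_eq_one_and_eq_mul_of_eq_mul hV₃ (eq_mul_of_tripleSum_eq hT₃ hV₁ hV₂ hw)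
  have h₂₃ := mul_eq_zero_of_tripleSum_eq hT
    ((Matrix.mul_assoc _ _ _).symm.trans hPM₁) hV₂ hV₃ hw'
  have h₃₁ := mul_eq_zero_of_tripleSum_eq hT₂
    ((Matrix.mul_assoc _ _ _).symm.trans hPM₂) hV₃ hV₁ hw'
  have hsum₁ := sum_row_eq_one_of_eq_mul hBPA₁ hA₁ hB₁
  have hsum₂ := sum_row_eq_one_of_eq_mul hBPA₂ hA₂ hB₂
  have hsum₃ := sum_row_eq_one_of_eq_mul hBPA₃ hA₃ hB₃
  choose π hπ₂ hπ₃ using fun x =>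
    exists_eq_single_of_mul_eq_zero (hsum₂ x) (hsum₃ x) (h₂₃ x)
  choose π' hπ₃' hπ₁ using fun x =>
    exists_eq_single_of_mul_eq_zero (hsum₃ x) (hsum₁ x) (h₃₁ x)
  obtain rfl : π' = π := funext fun x => by
    simpa [Pi.single_apply] using congrFun ((hπ₃' x).symm.trans (hπ₃ x)) (π' x)
  obtain ⟨hinj, hdiag⟩ := injective_of_rows_single_of_mul_eq_one hπ₁ hPM₁
  refine ⟨Equiv.ofBijective π' (Finite.injective_iff_bijective.mp hinj),
    fun x => ⟨?_, ?_, ?_, ?_⟩⟩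
  · rw [hBPA₁]; exact mul_apply_of_row_eq_single (hπ₁ x) A₁
  · rw [hBPA₂]; exact mul_apply_of_row_eq_single (hπ₂ x) A₂
  · rw [hBPA₃]; exact mul_apply_of_row_eq_single (hπ₃ x) A₃
  · have := hdiag x
    simp only [of_apply, hπ₂, hπ₃, Pi.single_eq_same, mul_one] at this
    exact (div_eq_one_iff_eq (hw _)).mp this

end TripleSum

lemma sum_prod_mul_prod {R ι κ : Type*} [CommSemiring R] [Fintype ι] [DecidableEq ι]
    [Fintype κ] (F G : ι → κ → R) :
    ∑ y : ι → κ, (∏ j, F j (y j)) * ∏ j, G j (y j) = ∏ j, ∑ c, F j c * G j c := by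
  simp_rw [← prod_mul_distrib]
  exact (Fintype.prod_sum (κ := fun _ => κ) fun j c => F j c * G j c).symm

lemma prod_ite_eq_section {M ι κ : Type*} [CommMonoid M] [Fintype ι] [Fintype κ]
    [DecidableEq ι] {s : ι → κ} {e : κ → ι} (he : ∀ k, s (e k) = k) (f : κ → M) :
    ∏ j, (if j = e (s j) then f (s j) else 1) = ∏ k, f k := by
  have himage : univ.filter (fun j => j = e (s j)) = univ.image e := by
    ext j
    simp only [mem_filter, mem_univ, true_and, mem_image]
    exact ⟨fun hj => ⟨s j, hj.symm⟩, by rintro ⟨k, rfl⟩; rw [he]⟩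
  rw [← prod_filter, himage, prod_image fun k _ k' _ hkk' => by rw [← he k, hkk', he]]
  simp only [he]

lemma exists_dual_of_ne {ι : Type*} [Fintype ι] [DecidableEq ι] {v : ι → Bool → ℝ}
    (hsum : ∀ x, ∑ c, v c x = 1) {c₀ : ι} (hc₀ : v c₀ false ≠ v c₀ true) :
    ∃ u : Bool → ι → ℝ, ∀ x b, ∑ c, v c x * u b c = if x = b then 1 else 0 := by
  set D := v c₀ true - v c₀ false
  have hD : D ≠ 0 := sub_ne_zero.mpr hc₀.symm
  set e : ι → ℝ := fun c => ((Pi.single c₀ (1 : ℝ) : ι → ℝ) c - v c₀ false) / D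
  have he : ∀ x, ∑ c, v c x * e c = (v c₀ x - v c₀ false) / D := fun x => by
    simp only [e, mul_div_assoc', ← sum_div, mul_sub, sum_sub_distrib, ← sum_mul, hsum,
      Pi.single_apply, mul_ite, mul_one, mul_zero, sum_ite_eq', mem_univ, if_true, one_mul]
  refine ⟨fun b c => if b then e c else 1 - e c, fun x b => ?_⟩
  cases b <;> simp only [Bool.false_eq_true, if_false, if_true, mul_sub, mul_one,
    sum_sub_distrib, hsum, he] <;> cases x <;> field_simp <;> simp [D]

lemma exists_surjective_prodMk_of_le_card_fiber {ι κ : Type*} [Fintype ι] [DecidableEq κ]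
    {n : ℕ} [NeZero n] {s : ι → κ} (h : ∀ k, n ≤ #{j | s j = k}) :
    ∃ g : ι → Fin n, Function.Surjective fun j => (g j, s j) := by
  classical
  have he : ∀ k, Nonempty (Fin n ↪ {j // s j = k}) := fun k =>
    Function.Embedding.nonempty_of_card_le (by simpa [Fintype.card_subtype] using h k)
  let e k := (he k).some
  let g j := if hj : ∃ i, (e (s j) i : ι) = j then hj.choose else 0
  have hg : ∀ j i, (e (s j) i : ι) = j → g j = i := fun j i hi => by
    have hj : ∃ i, (e (s j) i : ι) = j := ⟨i, hi⟩
    simp only [g, dif_pos hj]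
    exact (e (s j)).injective (Subtype.val_injective (hj.choose_spec.trans hi.symm))
  refine ⟨g, fun ⟨i, k⟩ => ?_⟩
  rcases hek : e k i with ⟨j, rfl⟩
  exact ⟨j, Prod.ext (hg j i (by rw [hek])) rfl⟩

section Bless

variable {K p d : ℕ} {ι : Type*} [DecidableEq ι]

/-- Row `α` is the law of `y` when the variables of group `i` follow the model given `α`
and all other variables are uniform on `Fin d`; the uniform padding lets every group use the
full index set `Fin p → Fin d`. -/
noncomputable def blessGroupMatrix (s : Fin p → Fin K) (θ : Fin p → Fin d → Bool → ℝ)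
    (g : Fin p → ι) (i : ι) : Matrix (Fin K → Bool) (Fin p → Fin d) ℝ :=
  of fun α y => ∏ j, if g j = i then θ j (y j) (α (s j)) else (d : ℝ)⁻¹

lemma tripleSum_blessGroupMatrix (s : Fin p → Fin K) (θ : Fin p → Fin d → Bool → ℝ)
    (ν : (Fin K → Bool) → ℝ) (g : Fin p → Fin 3) (a b c : Fin p → Fin d) :
    tripleSum ν (blessGroupMatrix s θ g 0) (blessGroupMatrix s θ g 1) (blessGroupMatrix s θ g 2)
      a b c = ((d : ℝ)⁻¹ ^ 2) ^ p * blessPMF s θ ν (fun j => ![a, b, c] (g j) j) := by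
  simp only [tripleSum, blessPMF, mul_sum, blessGroupMatrix, of_apply, mul_assoc,
    ← prod_mul_distrib]
  refine sum_congr rfl fun α _ => ?_
  rw [mul_left_comm, ← Fin.prod_const, ← prod_mul_distrib]
  congr 2
  ext j
  generalize g j = i
  fin_cases i <;> simp <;> ring

variable {s : Fin p → Fin K} {θ : Fin p → Fin d → Bool → ℝ} {g : Fin p → ι}

lemma sum_ite_inv_eq_one (hd : 0 < d) {v : Fin d → Bool → ℝ} (hsum : ∀ x, ∑ c, v c x = 1)
    (P : Prop) [Decidable P] (x : Bool) : ∑ c, (if P then v c x else (d : ℝ)⁻¹) = 1 := by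
  split_ifs
  · exact hsum x
  · simp [hd.ne']

lemma blessGroupMatrix_dotProduct_prod (i : ι) (α : Fin K → Bool) (H : Fin p → Fin d → ℝ) :
    blessGroupMatrix s θ g i α ⬝ᵥ (fun y => ∏ j, H j (y j))
      = ∏ j, ∑ c, (if g j = i then θ j c (α (s j)) else (d : ℝ)⁻¹) * H j c := by
  simp only [dotProduct, blessGroupMatrix, of_apply]
  exact sum_prod_mul_prod (fun j c => if g j = i then θ j c (α (s j)) else (d : ℝ)⁻¹) H

lemma blessGroupMatrix_mulVec_one (hd : 0 < d) (hsum : ∀ j x, ∑ c, θ j c x = 1) (i : ι) :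
    blessGroupMatrix s θ g i *ᵥ 1 = 1 := by
  ext α
  have h := blessGroupMatrix_dotProduct_prod (s := s) (θ := θ) (g := g) i α fun _ _ => 1
  simp only [prod_const_one, mul_one, sum_ite_inv_eq_one hd (hsum _)] at h
  exact h

lemma blessGroupMatrix_dotProduct_indicator (hd : 0 < d) (hsum : ∀ j x, ∑ c, θ j c x = 1)
    {i : ι} {j : Fin p} (hj : g j = i) (c : Fin d) (α : Fin K → Bool) :
    blessGroupMatrix s θ g i α ⬝ᵥ (fun y => if y j = c then 1 else 0) = θ j c (α (s j)) := by
  have hind : (fun y : Fin p → Fin d => if y j = c then (1 : ℝ) else 0)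
      = fun y => ∏ j', if j' = j then (if y j' = c then 1 else 0) else 1 := by
    simp [prod_ite_eq']
  rw [hind]
  refine (blessGroupMatrix_dotProduct_prod i α fun j' c' =>
    if j' = j then (if c' = c then 1 else 0) else 1).trans ?_
  rw [prod_eq_single j]
  · simp [hj]
  · intro j' _ hj'
    simp only [if_neg hj', mul_one, sum_ite_inv_eq_one hd (hsum j')]
  · simp

lemma exists_mul_blessGroupMatrix_eq_one (hd : 0 < d) (hsum : ∀ j x, ∑ c, θ j c x = 1)
    {c₀ : Fin d} (hθ : ∀ j, θ j c₀ false ≠ θ j c₀ true) {i : ι}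
    (hg : ∀ k, ∃ j, g j = i ∧ s j = k) :
    ∃ V : Matrix (Fin p → Fin d) (Fin K → Bool) ℝ, blessGroupMatrix s θ g i * V = 1 := by
  choose u hu using fun j => exists_dual_of_ne (hsum j) (hθ j)
  choose e hge hse using hg
  refine ⟨of fun y α => ∏ j, if j = e (s j) then u j (α (s j)) (y j) else 1, ?_⟩
  ext β α
  have hj : ∀ j, ∑ c, (if g j = i then θ j c (β (s j)) else (d : ℝ)⁻¹)
      * (if j = e (s j) then u j (α (s j)) c else 1)
      = if j = e (s j) then (if β (s j) = α (s j) then 1 else 0) else 1 := fun j => by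
    by_cases hje : j = e (s j)
    · have hgj : g j = i := (congrArg g hje).trans (hge _)
      simp only [if_pos hgj, if_pos hje]
      exact hu j _ _
    · simp only [if_neg hje, mul_one]
      exact sum_ite_inv_eq_one hd (hsum j) _ _
  refine (blessGroupMatrix_dotProduct_prod i β fun j c =>
    if j = e (s j) then u j (α (s j)) c else 1).trans ?_
  simp only [hj]
  rw [prod_ite_eq_section hse (fun k => if β k = α k then (1 : ℝ) else 0), Fintype.prod_boole,
    one_apply]
  simp only [← funext_iff]

end Bless

lemma Bool.eq_id_of_apply_lt_apply {f : Bool → ℝ} (hf : f false < f true) {φ : Bool → Bool}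
    (hφ : f (φ false) < f (φ true)) : φ = id := by
  funext x
  cases h₀ : φ false <;> cases h₁ : φ true <;> rw [h₀, h₁] at hφ <;> cases x <;>
    first | assumption | exact absurd hφ (lt_irrefl _) | exact absurd hφ (not_lt.mpr hf.le)

lemma eq_and_apply_eq_of_comp {ι κ : Type*} {θ θ' : ι → Bool → ℝ} {c₀ : ι}
    (h₀ : θ c₀ false < θ c₀ true) (h₀' : θ' c₀ false < θ' c₀ true)
    {π : (κ → Bool) → κ → Bool} {k k' : κ} (h : ∀ c α, θ' c (α k') = θ c (π α k)) :
    θ' = θ ∧ ∀ α, π α k = α k' := by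
  have hπ : ∀ x, π (fun _ => x) k = x := congrFun <|
    Bool.eq_id_of_apply_lt_apply h₀ (φ := fun x => π (fun _ => x) k) (by rw [← h, ← h]; exact h₀')
  have hθ : θ' = θ := funext₂ fun c x => by rw [h c fun _ => x, hπ]
  refine ⟨hθ, fun α => ?_⟩
  have hα := h c₀ α
  rw [hθ] at hα
  cases hx : α k' <;> cases hy : π α k <;> rw [hx, hy] at hα <;> first
    | rfl | exact absurd hα h₀.ne | exact absurd hα h₀.ne'

lemma exists_perm_of_apply_eq {ι κ : Type*} [Finite κ] {s s' : ι → κ}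
    (hs : Function.Surjective s) (π : (κ → Bool) ≃ (κ → Bool))
    (h : ∀ α j, π α (s j) = α (s' j)) :
    ∃ σ : Equiv.Perm κ, (∀ j, s' j = σ (s j)) ∧ ∀ α, π α = fun k => α (σ k) := by
  classical
  set τ := s' ∘ Function.surjInv hs
  have hπ : ∀ α, π α = α ∘ τ := fun α => funext fun k => by
    simpa [τ, Function.surjInv_eq hs k] using h α (Function.surjInv hs k)
  have hτ : Function.Injective τ := Function.surjective_comp_right_iff_injective.mp
    fun β => ⟨π.symm β, by simp only [← hπ, π.apply_symm_apply]⟩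
  refine ⟨Equiv.ofBijective τ (Finite.injective_iff_bijective.mp hτ), fun j => ?_, hπ⟩
  simpa [eq_comm, hπ] using h (fun k => decide (k = s' j)) j

/-- if every latent variable has at least three observed children, the BLESS
model is strictly identifiable: any valid parameter set giving the same joint distribution
equals the true one up to a permutation of the latent variables. -/
theorem bless_three_children_strictly_identifiable {K p d : ℕ} (hd : 2 ≤ d)
    (s sb : Fin p → Fin K)
    (θ θb : Fin p → Fin d → Bool → ℝ) (ν νb : (Fin K → Bool) → ℝ)
    (h1 : BlessValid θ ν) (h2 : BlessValid θb νb)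
    (heq : ∀ c, blessPMF s θ ν c = blessPMF sb θb νb c)
    (hchild : ∀ k, 3 ≤ (Finset.univ.filter (fun j => s j = k)).card) :
    ∃ σ : Equiv.Perm (Fin K),
      (∀ j, sb j = σ (s j)) ∧
      (∀ j c x, θb j c x = θ j c x) ∧
      (∀ α : Fin K → Bool, νb α = ν (fun i => α (σ i))) := by
  obtain ⟨g, hg⟩ := exists_surjective_prodMk_of_le_card_fiber (n := 3) hchild
  have hd₀ : 0 < d := by omega
  have hc₀ : ((⟨0, hd₀⟩ : Fin d) : ℕ) + 1 < d := hd
  have hmono := fun j => h1.theta_mono j _ hc₀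
  have hmonob := fun j => h2.theta_mono j _ hc₀
  have hT : tripleSum ν (blessGroupMatrix s θ g 0) (blessGroupMatrix s θ g 1)
      (blessGroupMatrix s θ g 2) = tripleSum νb (blessGroupMatrix sb θb g 0)
      (blessGroupMatrix sb θb g 1) (blessGroupMatrix sb θb g 2) := by
    ext a b c
    rw [tripleSum_blessGroupMatrix, tripleSum_blessGroupMatrix, heq]
  have hV := fun i => exists_mul_blessGroupMatrix_eq_one hd₀ h1.theta_sum
    (fun j => (hmono j).ne) fun k => (hg (i, k)).imp fun _ => Prod.ext_iff.mp
  have hrow := blessGroupMatrix_mulVec_one hd₀ h1.theta_sum (s := s) (g := g)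
  have hrowb := blessGroupMatrix_mulVec_one hd₀ h2.theta_sum (s := sb) (g := g)
  obtain ⟨π, hπ⟩ := exists_perm_of_tripleSum_eq hT (hV 0).choose_spec (hV 1).choose_spec
    (hV 2).choose_spec (hrow 0) (hrow 1) (hrow 2) (hrowb 0) (hrowb 1) (hrowb 2)
    (fun α => (h1.nu_pos α).ne') fun α => (h2.nu_pos α).ne'
  have hgroup : ∀ i α, blessGroupMatrix sb θb g i α = blessGroupMatrix s θ g i (π α) := by
    intro i α
    fin_cases i
    exacts [(hπ α).1, (hπ α).2.1, (hπ α).2.2.1]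
  have hmarg : ∀ j c α, θb j c (α (sb j)) = θ j c (π α (s j)) := fun j c α => by
    rw [← blessGroupMatrix_dotProduct_indicator (g := g) hd₀ h2.theta_sum rfl, hgroup,
      blessGroupMatrix_dotProduct_indicator hd₀ h1.theta_sum rfl]
  have hθ := fun j => eq_and_apply_eq_of_comp (hmono j) (hmonob j) (hmarg j)
  have hs : Function.Surjective s := fun k => (hg (0, k)).imp fun _ => congrArg Prod.snd
  obtain ⟨σ, hsb, hπσ⟩ := exists_perm_of_apply_eq hs π fun α j => (hθ j).2 α
  exact ⟨σ, hsb, fun j c x => by rw [(hθ j).1], fun α => by rw [(hπ α).2.2.2, hπσ]⟩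
end

section
/- Let K ≥ 1, d ≥ 2, and let s : {1,…,p} → {1,…,K} be a surjective parent map such that some latent variable has at most two observed children, i.e., |s^{-1}(k)| ≤ 2 for some k ∈ {1,…,K}. Then the BLESS model with parent map s is not strictly identifiable: there exist valid BLESS parameter sets (s, θ, ν) and (s, θ̄, ν̄) with (θ̄, ν̄) ≠ (θ, ν) whose joint probability mass functions agree: P(y = c | s, θ, ν) = P(y = c | s, θ̄, ν̄) for every c ∈ {1,…,d}^p. -/
open Finset

noncomputable def beps (d : ℕ) : ℝ := 1 / (4 * (d : ℝ) ^ 2)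

noncomputable def bdel (d : ℕ) (c : Fin d) : ℝ :=
  beps d - if (c : ℕ) = d - 1 then (d : ℝ) * beps d else 0

noncomputable def bth (d : ℕ) (a : ℝ) (c : Fin d) (x : Bool) : ℝ :=
  1 / (d : ℝ) + (if x then a else -a) * bdel d c

lemma beps_pos {d : ℕ} (hd : 2 ≤ d) : 0 < beps d := by
  have h : (0 : ℝ) < d := by exact_mod_cast (by omega : 0 < d)
  unfold beps; positivity

lemma bdel_sum {d : ℕ} (hd : 2 ≤ d) : ∑ c, bdel d c = 0 := by
  have hd0 : 0 < d := by omega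
  have hcond : ∀ c : Fin d, ((c : ℕ) = d - 1) = (c = ⟨d - 1, by omega⟩) := by
    intro c; simp [Fin.ext_iff]
  simp only [bdel, hcond, Finset.sum_sub_distrib, Finset.sum_ite_eq', Finset.mem_univ, if_true,
    Finset.sum_const, Finset.card_univ, Fintype.card_fin, nsmul_eq_mul]
  ring

lemma bth_bounds {d : ℕ} (hd : 2 ≤ d) {a : ℝ} (ha0 : 0 < a) (ha2 : a ≤ 2) (c : Fin d)
    (x : Bool) : 0 < bth d a c x ∧ bth d a c x < 1 := by
  have hD : (2 : ℝ) ≤ (d : ℝ) := by exact_mod_cast hd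
  have hDpos : (0 : ℝ) < (d : ℝ) := by linarith
  have hepspos : 0 < beps d := beps_pos hd
  have heps : beps d = 1 / (4 * (d : ℝ) ^ 2) := rfl
  have hdel : |bdel d c| ≤ ((d : ℝ) - 1) * beps d := by
    unfold bdel; split_ifs with h
    · rw [abs_of_nonpos (by nlinarith)]; nlinarith
    · simp only [sub_zero]; rw [abs_of_nonneg (le_of_lt hepspos)]; nlinarith
  have habs : |(if x then a else -a) * bdel d c| < 1 / (2 * (d : ℝ)) := by
    rw [abs_mul]
    have h1 : |(if x then a else -a)| = a := by
      cases x <;> simp [abs_of_pos ha0]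
    rw [h1]
    have h2 : a * |bdel d c| ≤ 2 * (((d : ℝ) - 1) * beps d) := by
      nlinarith [abs_nonneg (bdel d c)]
    have h3 : 2 * (((d : ℝ) - 1) * beps d) < 1 / (2 * (d : ℝ)) := by
      rw [heps, show 2 * (((d : ℝ) - 1) * (1 / (4 * (d : ℝ) ^ 2))) =
        ((d : ℝ) - 1) / (2 * (d : ℝ) ^ 2) by ring,
        div_lt_div_iff₀ (by positivity) (by positivity)]
      nlinarith
    linarith
  rw [abs_lt] at habs
  have hinv : 1 / (d : ℝ) ≤ 1 / 2 := by
    apply div_le_div_of_nonneg_left (by norm_num) (by norm_num) hD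
  have hinv2 : (0 : ℝ) < 1 / (2 * (d : ℝ)) := by positivity
  constructor
  · unfold bth
    have : 1 / (2 * (d : ℝ)) ≤ 1 / (d : ℝ) := by
      rw [div_le_div_iff₀ (by positivity) hDpos]; nlinarith
    linarith [habs.1]
  · unfold bth
    have : 1 / (d : ℝ) + 1 / (2 * (d : ℝ)) < 1 := by
      rw [div_add_div _ _ (ne_of_gt hDpos) (by positivity)]
      rw [div_lt_one (by positivity)]
      nlinarith
    linarith [habs.2]

lemma bless_valid {K p d : ℕ} (hd : 2 ≤ d) (a : Fin p → ℝ)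
    (ha : ∀ j, 0 < a j ∧ a j ≤ 2) :
    BlessValid (K := K) (fun j c x => bth d (a j) c x) (fun _ => ((2 : ℝ) ^ K)⁻¹) where
  theta_pos j c x := (bth_bounds hd (ha j).1 (ha j).2 c x).1
  theta_lt_one j c x := (bth_bounds hd (ha j).1 (ha j).2 c x).2
  theta_sum j x := by
    have hDpos : (0 : ℝ) < (d : ℝ) := by exact_mod_cast (by omega : 0 < d)
    simp only [bth, Finset.sum_add_distrib, ← Finset.mul_sum, bdel_sum hd, mul_zero, add_zero,
      Finset.sum_const, Finset.card_univ, Fintype.card_fin, nsmul_eq_mul]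
    field_simp
  theta_mono j c hc := by
    have h1 : ¬ ((c : ℕ) = d - 1) := by omega
    have h2 := beps_pos hd
    have h3 := (ha j).1
    simp only [bth, bdel, h1, if_false, if_true, Bool.false_eq_true, sub_zero]
    nlinarith
  nu_pos _ := by positivity
  nu_sum := by
    simp [Finset.sum_const, Finset.card_univ]

lemma bfactor {K p : ℕ} (s : Fin p → Fin K) (f : Fin p → Bool → ℝ) :
    ∑ α : Fin K → Bool, ∏ j, f j (α (s j)) =
      ∏ k, ∑ x : Bool, ∏ j ∈ Finset.univ.filter (fun j => s j = k), f j x := by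
  rw [Finset.prod_univ_sum, Fintype.piFinset_univ]
  apply Finset.sum_congr rfl
  intro α _
  calc ∏ j, f j (α (s j))
      = ∏ k, ∏ j ∈ Finset.univ.filter (fun j => s j = k), f j (α (s j)) :=
        (Finset.prod_fiberwise_of_maps_to (fun j _ => Finset.mem_univ (s j)) _).symm
    _ = ∏ k, ∏ j ∈ Finset.univ.filter (fun j => s j = k), f j (α k) := by
        refine Finset.prod_congr rfl fun k _ => Finset.prod_congr rfl fun j hj => ?_
        rw [(Finset.mem_filter.mp hj).2]

/-- if some latent variable has at most two observed children (with `s`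
surjective), the BLESS model is not strictly identifiable: there exist two distinct
valid parameter sets with the same parent map and the same joint distribution. -/
theorem bless_not_strictly_identifiable_of_le_two_children {K p d : ℕ}
    (hK : 1 ≤ K) (hd : 2 ≤ d) (s : Fin p → Fin K)
    (hsurj : Function.Surjective s)
    (hk : ∃ k, (Finset.univ.filter (fun j => s j = k)).card ≤ 2) :
    ∃ (θ θ' : Fin p → Fin d → Bool → ℝ) (ν ν' : (Fin K → Bool) → ℝ),
      BlessValid θ ν ∧ BlessValid θ' ν' ∧ (θ ≠ θ' ∨ ν ≠ ν') ∧
      ∀ c, blessPMF s θ ν c = blessPMF s θ' ν' c := by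
  classical
  obtain ⟨k, hcard⟩ := hk
  obtain ⟨j0, hj0⟩ := hsurj k
  have hj0mem : j0 ∈ Finset.univ.filter (fun j => s j = k) := by simp [hj0]
  have hpos : 0 < (Finset.univ.filter (fun j => s j = k)).card :=
    Finset.card_pos.mpr ⟨j0, hj0mem⟩
  have h12 : (Finset.univ.filter (fun j => s j = k)).card = 1 ∨
      (Finset.univ.filter (fun j => s j = k)).card = 2 := by omega
  have heps := beps_pos hd
  have hc0 : (⟨0, by omega⟩ : Fin d) = (⟨0, by omega⟩ : Fin d) := rfl
  set c0 : Fin d := ⟨0, by omega⟩ with hc0def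
  have hdel0 : bdel d c0 = beps d := by
    have : ¬ ((c0 : ℕ) = d - 1) := by simp [c0]; omega
    simp [bdel, this]
  rcases h12 with h1 | h2
  · -- one child
    obtain ⟨j1, hfib⟩ := Finset.card_eq_one.mp h1
    have hj1 : s j1 = k := by
      have : j1 ∈ Finset.univ.filter (fun j => s j = k) := by
        rw [hfib]; exact Finset.mem_singleton_self j1
      exact (Finset.mem_filter.mp this).2
    refine ⟨fun j c x => bth d 1 c x,
      fun j c x => bth d (if j = j1 then 2 else 1) c x,
      fun _ => ((2 : ℝ) ^ K)⁻¹, fun _ => ((2 : ℝ) ^ K)⁻¹,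
      bless_valid hd (fun _ => 1) (fun _ => by norm_num),
      bless_valid hd _ (fun j => by split_ifs <;> norm_num), ?_, ?_⟩
    · left
      intro h
      have h2 := congrFun (congrFun (congrFun h j1) c0) true
      simp only [bth, if_pos rfl, if_true, hdel0] at h2
      linarith
    · intro c
      unfold blessPMF
      rw [← Finset.mul_sum, ← Finset.mul_sum]
      congr 1
      rw [bfactor, bfactor]
      refine Finset.prod_congr rfl fun k' _ => ?_
      by_cases hkk : k' = k
      · subst hkk
        rw [hfib]
        rw [Fintype.sum_bool, Fintype.sum_bool, Finset.prod_singleton,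
          Finset.prod_singleton, Finset.prod_singleton, Finset.prod_singleton]
        simp only [bth, if_pos rfl, if_true, Bool.false_eq_true, if_false]
        ring
      · refine Finset.sum_congr rfl fun x _ => Finset.prod_congr rfl fun j hj => ?_
        have hsj : s j = k' := (Finset.mem_filter.mp hj).2
        have hne : j ≠ j1 := fun h => hkk (by rw [← hsj, h, hj1])
        simp [hne]
  · -- two children
    obtain ⟨j1, j2, hne12, hfib⟩ := Finset.card_eq_two.mp h2
    have hj1 : s j1 = k := by
      have : j1 ∈ Finset.univ.filter (fun j => s j = k) := by
        rw [hfib]; exact Finset.mem_insert_self j1 {j2}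
      exact (Finset.mem_filter.mp this).2
    have hj2 : s j2 = k := by
      have : j2 ∈ Finset.univ.filter (fun j => s j = k) := by
        rw [hfib]; exact Finset.mem_insert_of_mem (Finset.mem_singleton_self j2)
      exact (Finset.mem_filter.mp this).2
    refine ⟨fun j c x => bth d 1 c x,
      fun j c x => bth d (if j = j1 then 2 else if j = j2 then 1/2 else 1) c x,
      fun _ => ((2 : ℝ) ^ K)⁻¹, fun _ => ((2 : ℝ) ^ K)⁻¹,
      bless_valid hd (fun _ => 1) (fun _ => by norm_num),
      bless_valid hd _ (fun j => by split_ifs <;> norm_num), ?_, ?_⟩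
    · left
      intro h
      have h2 := congrFun (congrFun (congrFun h j1) c0) true
      simp only [bth, if_pos rfl, if_true, hdel0] at h2
      linarith
    · intro c
      unfold blessPMF
      rw [← Finset.mul_sum, ← Finset.mul_sum]
      congr 1
      rw [bfactor, bfactor]
      refine Finset.prod_congr rfl fun k' _ => ?_
      by_cases hkk : k' = k
      · subst hkk
        rw [hfib]
        rw [Fintype.sum_bool, Fintype.sum_bool, Finset.prod_pair hne12,
          Finset.prod_pair hne12, Finset.prod_pair hne12, Finset.prod_pair hne12]
        simp only [bth, if_pos rfl, if_neg hne12.symm, if_neg hne12,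
          if_true, Bool.false_eq_true, if_false]
        ring
      · refine Finset.sum_congr rfl fun x _ => Finset.prod_congr rfl fun j hj => ?_
        have hsj : s j = k' := (Finset.mem_filter.mp hj).2
        have hn1 : j ≠ j1 := fun h => hkk (by rw [← hsj, h, hj1])
        have hn2 : j ≠ j2 := fun h => hkk (by rw [← hsj, h, hj2])
        simp [hn1, hn2]
end

section
/- Let (s, θ, ν) be a valid BLESS parameter set and let k₁ ≠ k₂ be two latent variable indices, each having at least one observed child. For a subset S ⊆ {1,…,p} and an assignment c = (c_j)_{j∈S} with c_j ∈ {1,…,d}, write P_S(c) = ∑_{α∈{0,1}^K} ν_α ∏_{j∈S} t_j(c_j, α) for the marginal probability that y_j = c_j for all j ∈ S. Let S₁ = s^{-1}(k₁) and S₂ = s^{-1}(k₂). Then the two groups of observed children are independent — i.e., P_{S₁∪S₂}(c ∪ c') = P_{S₁}(c)·P_{S₂}(c') for all assignments c on S₁ and c' on S₂ — if and only if α_{k₁} and α_{k₂} are independent under ν, i.e., ∑_{α : α_{k₁}=a, α_{k₂}=b} ν_α = (∑_{α : α_{k₁}=a} ν_α)·(∑_{α : α_{k₂}=b} ν_α)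 for all a, b ∈ {0,1}. -/
open Finset

/-- Marginal probability, under the BLESS model, that `y_j = c_j` for all `j ∈ S`. -/
def blessMarg {K p d : ℕ} (s : Fin p → Fin K) (θ : Fin p → Fin d → Bool → ℝ)
    (ν : (Fin K → Bool) → ℝ) (S : Finset (Fin p)) (c : Fin p → Fin d) : ℝ :=
  ∑ α : Fin K → Bool, ν α * ∏ j ∈ S, θ j (c j) (α (s j))

lemma bless_group1 {K : ℕ} (ν : (Fin K → Bool) → ℝ) (k : Fin K) (f : Bool → ℝ) :
    ∑ α : Fin K → Bool, ν α * f (α k)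
      = ∑ a : Bool, (∑ α : Fin K → Bool, if α k = a then ν α else 0) * f a := by
  have h : ∀ α : Fin K → Bool, ν α * f (α k)
      = ∑ a : Bool, if α k = a then ν α * f a else 0 := by
    intro α; simp
  simp_rw [h]
  rw [Finset.sum_comm]
  refine Finset.sum_congr rfl fun a _ => ?_
  rw [Finset.sum_mul]
  exact Finset.sum_congr rfl fun α _ => by split <;> simp

lemma bless_group2 {K : ℕ} (ν : (Fin K → Bool) → ℝ) (k1 k2 : Fin K) (f : Bool → Bool → ℝ) :
    ∑ α : Fin K → Bool, ν α * f (α k1) (α k2)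
      = ∑ a : Bool, ∑ b : Bool,
          (∑ α : Fin K → Bool, if α k1 = a ∧ α k2 = b then ν α else 0) * f a b := by
  have h : ∀ α : Fin K → Bool, ν α * f (α k1) (α k2)
      = ∑ a : Bool, ∑ b : Bool, if α k1 = a ∧ α k2 = b then ν α * f a b else 0 := by
    intro α; simp [ite_and]
  simp_rw [h]
  rw [Finset.sum_comm]
  refine Finset.sum_congr rfl fun a _ => ?_
  rw [Finset.sum_comm]
  refine Finset.sum_congr rfl fun b _ => ?_
  rw [Finset.sum_mul]
  exact Finset.sum_congr rfl fun α _ => by split <;> simp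

lemma bless_core_identity (Wtt Wtf Wft Wff Ut Uf Vt Vf Ft Ff Gt Gf : ℝ)
    (h1 : Wtt + Wtf = Ut) (h2 : Wft + Wff = Uf) (h3 : Wtt + Wft = Vt)
    (h5 : Ut + Uf = 1) (h6 : Vt + Vf = 1) :
    (Wtt * (Ft * Gt) + Wtf * (Ft * Gf)) + (Wft * (Ff * Gt) + Wff * (Ff * Gf))
      - (Ut * Ft + Uf * Ff) * (Vt * Gt + Vf * Gf)
      = (Wtt - Ut * Vt) * (Ft - Ff) * (Gt - Gf) := by
  have e1 : Wtf = Ut - Wtt := by linarith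
  have e2 : Wft = Vt - Wtt := by linarith
  have e3 : Wff = 1 - Ut - Vt + Wtt := by linarith
  have e4 : Uf = 1 - Ut := by linarith
  have e5 : Vf = 1 - Vt := by linarith
  rw [e1, e2, e3, e4, e5]; ring

lemma bless_core_conclusion (Wtt Wtf Wft Wff Ut Uf Vt Vf : ℝ)
    (h1 : Wtt + Wtf = Ut) (h2 : Wft + Wff = Uf) (h3 : Wtt + Wft = Vt)
    (h5 : Ut + Uf = 1) (h6 : Vt + Vf = 1) (he : Wtt - Ut * Vt = 0) :
    Wtt = Ut * Vt ∧ Wtf = Ut * Vf ∧ Wft = Uf * Vt ∧ Wff = Uf * Vf := by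
  have e1 : Wtf = Ut - Wtt := by linarith
  have e2 : Wft = Vt - Wtt := by linarith
  have e3 : Wff = 1 - Ut - Vt + Wtt := by linarith
  have e4 : Uf = 1 - Ut := by linarith
  have e5 : Vf = 1 - Vt := by linarith
  have e0 : Wtt = Ut * Vt := by linarith
  refine ⟨e0, ?_, ?_, ?_⟩
  · linear_combination e1 - Ut * e5 - e0
  · linear_combination e2 - Vt * e4 - e0
  · linear_combination e3 + e0 - Vf * e4 - (1 - Ut) * e5

/-- under the BLESS model, the groups of observed children of two distinct
latent variables `α_{k₁}` and `α_{k₂}` are independent if and only if `α_{k₁}` and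
`α_{k₂}` are independent under `ν`. -/
theorem bless_children_indep_iff_latent_indep {K p d : ℕ} (hd : 2 ≤ d)
    (s : Fin p → Fin K) (θ : Fin p → Fin d → Bool → ℝ) (ν : (Fin K → Bool) → ℝ)
    (hval : BlessValid θ ν) (k1 k2 : Fin K) (hne : k1 ≠ k2)
    (h1 : (Finset.univ.filter (fun j => s j = k1)).Nonempty)
    (h2 : (Finset.univ.filter (fun j => s j = k2)).Nonempty) :
    ((∀ c : Fin p → Fin d,
        blessMarg s θ ν
            (Finset.univ.filter (fun j => s j = k1) ∪
              Finset.univ.filter (fun j => s j = k2)) c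
          = blessMarg s θ ν (Finset.univ.filter (fun j => s j = k1)) c *
            blessMarg s θ ν (Finset.univ.filter (fun j => s j = k2)) c)
      ↔ (∀ a b : Bool,
          (∑ α : Fin K → Bool, if α k1 = a ∧ α k2 = b then ν α else 0)
            = (∑ α : Fin K → Bool, if α k1 = a then ν α else 0) *
              (∑ α : Fin K → Bool, if α k2 = b then ν α else 0))) := by
  classical
  set S1 := Finset.univ.filter (fun j => s j = k1) with hS1
  set S2 := Finset.univ.filter (fun j => s j = k2) with hS2
  have hmemS1 : ∀ j ∈ S1, s j = k1 := fun j hj => (Finset.mem_filter.mp hj).2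
  have hmemS2 : ∀ j ∈ S2, s j = k2 := fun j hj => (Finset.mem_filter.mp hj).2
  have hdisj : Disjoint S1 S2 := by
    rw [Finset.disjoint_left]
    intro j hj1 hj2
    exact hne ((hmemS1 j hj1).symm.trans (hmemS2 j hj2))
  -- marginal formulas
  have hm1 : ∀ c : Fin p → Fin d, blessMarg s θ ν S1 c
      = ∑ a : Bool, (∑ α : Fin K → Bool, if α k1 = a then ν α else 0) *
          ∏ j ∈ S1, θ j (c j) a := by
    intro c
    unfold blessMarg
    have h : ∀ α : Fin K → Bool,
        ∏ j ∈ S1, θ j (c j) (α (s j)) = ∏ j ∈ S1, θ j (c j) (α k1) :=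
      fun α => Finset.prod_congr rfl fun j hj => by rw [hmemS1 j hj]
    simp_rw [h]
    exact bless_group1 ν k1 (fun a => ∏ j ∈ S1, θ j (c j) a)
  have hm2 : ∀ c : Fin p → Fin d, blessMarg s θ ν S2 c
      = ∑ b : Bool, (∑ α : Fin K → Bool, if α k2 = b then ν α else 0) *
          ∏ j ∈ S2, θ j (c j) b := by
    intro c
    unfold blessMarg
    have h : ∀ α : Fin K → Bool,
        ∏ j ∈ S2, θ j (c j) (α (s j)) = ∏ j ∈ S2, θ j (c j) (α k2) :=
      fun α => Finset.prod_congr rfl fun j hj => by rw [hmemS2 j hj]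
    simp_rw [h]
    exact bless_group1 ν k2 (fun b => ∏ j ∈ S2, θ j (c j) b)
  have hm12 : ∀ c : Fin p → Fin d, blessMarg s θ ν (S1 ∪ S2) c
      = ∑ a : Bool, ∑ b : Bool,
          (∑ α : Fin K → Bool, if α k1 = a ∧ α k2 = b then ν α else 0) *
            ((∏ j ∈ S1, θ j (c j) a) * (∏ j ∈ S2, θ j (c j) b)) := by
    intro c
    unfold blessMarg
    have h : ∀ α : Fin K → Bool,
        ∏ j ∈ S1 ∪ S2, θ j (c j) (α (s j))
          = (∏ j ∈ S1, θ j (c j) (α k1)) * (∏ j ∈ S2, θ j (c j) (α k2)) := by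
      intro α
      rw [Finset.prod_union hdisj]
      congr 1
      · exact Finset.prod_congr rfl fun j hj => by rw [hmemS1 j hj]
      · exact Finset.prod_congr rfl fun j hj => by rw [hmemS2 j hj]
    simp_rw [h]
    exact bless_group2 ν k1 k2
      (fun a b => (∏ j ∈ S1, θ j (c j) a) * (∏ j ∈ S2, θ j (c j) b))
  -- linear relations among the latent sums
  have hrow : ∀ a : Bool,
      (∑ α : Fin K → Bool, if α k1 = a ∧ α k2 = true then ν α else 0)
        + (∑ α : Fin K → Bool, if α k1 = a ∧ α k2 = false then ν α else 0)
        = ∑ α : Fin K → Bool, if α k1 = a then ν α else 0 := by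
    intro a
    rw [← Finset.sum_add_distrib]
    refine Finset.sum_congr rfl fun α _ => ?_
    cases h : α k2 <;> simp [h]
  have hcol :
      (∑ α : Fin K → Bool, if α k1 = true ∧ α k2 = true then ν α else 0)
        + (∑ α : Fin K → Bool, if α k1 = false ∧ α k2 = true then ν α else 0)
        = ∑ α : Fin K → Bool, if α k2 = true then ν α else 0 := by
    rw [← Finset.sum_add_distrib]
    refine Finset.sum_congr rfl fun α _ => ?_
    cases h : α k1 <;> simp [h]
  have hUsum :
      (∑ α : Fin K → Bool, if α k1 = true then ν α else 0)
        + (∑ α : Fin K → Bool, if α k1 = false then ν α else 0) = 1 := by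
    rw [← Finset.sum_add_distrib, ← hval.nu_sum]
    refine Finset.sum_congr rfl fun α _ => ?_
    cases h : α k1 <;> simp [h]
  have hVsum :
      (∑ α : Fin K → Bool, if α k2 = true then ν α else 0)
        + (∑ α : Fin K → Bool, if α k2 = false then ν α else 0) = 1 := by
    rw [← Finset.sum_add_distrib, ← hval.nu_sum]
    refine Finset.sum_congr rfl fun α _ => ?_
    cases h : α k2 <;> simp [h]
  -- key identity
  have key : ∀ c : Fin p → Fin d,
      blessMarg s θ ν (S1 ∪ S2) c - blessMarg s θ ν S1 c * blessMarg s θ ν S2 c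
        = ((∑ α : Fin K → Bool, if α k1 = true ∧ α k2 = true then ν α else 0)
            - (∑ α : Fin K → Bool, if α k1 = true then ν α else 0)
              * (∑ α : Fin K → Bool, if α k2 = true then ν α else 0))
          * ((∏ j ∈ S1, θ j (c j) true) - (∏ j ∈ S1, θ j (c j) false))
          * ((∏ j ∈ S2, θ j (c j) true) - (∏ j ∈ S2, θ j (c j) false)) := by
    intro c
    rw [hm12 c, hm1 c, hm2 c]
    simp only [Fintype.sum_bool]
    exact bless_core_identity _ _ _ _ _ _ _ _ _ _ _ _
      (hrow true) (hrow false) hcol hUsum hVsum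
  constructor
  · intro hmarg
    have hd0 : 0 < d := by omega
    set c0 : Fin p → Fin d := fun _ => ⟨0, hd0⟩ with hc0
    have hmono : ∀ j : Fin p, θ j (c0 j) false < θ j (c0 j) true := by
      intro j
      apply hval.theta_mono
      simp [hc0]
      omega
    have hF : (∏ j ∈ S1, θ j (c0 j) false) < ∏ j ∈ S1, θ j (c0 j) true :=
      Finset.prod_lt_prod_of_nonempty (fun j _ => hval.theta_pos j _ false)
        (fun j _ => hmono j) h1
    have hG : (∏ j ∈ S2, θ j (c0 j) false) < ∏ j ∈ S2, θ j (c0 j) true :=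
      Finset.prod_lt_prod_of_nonempty (fun j _ => hval.theta_pos j _ false)
        (fun j _ => hmono j) h2
    have hzero := key c0
    rw [hmarg c0, sub_self] at hzero
    have he : ((∑ α : Fin K → Bool, if α k1 = true ∧ α k2 = true then ν α else 0)
        - (∑ α : Fin K → Bool, if α k1 = true then ν α else 0)
          * (∑ α : Fin K → Bool, if α k2 = true then ν α else 0)) = 0 := by
      rcases mul_eq_zero.mp hzero.symm with h | h
      · rcases mul_eq_zero.mp h with h' | h'
        · exact h'
        · exact absurd h' (ne_of_gt (sub_pos.mpr hF))
      · exact absurd h (ne_of_gt (sub_pos.mpr hG))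
    obtain ⟨ett, etf, eft, eff⟩ := bless_core_conclusion _ _ _ _ _ _ _ _
      (hrow true) (hrow false) hcol hUsum hVsum he
    intro a b
    cases a <;> cases b
    · exact eff
    · exact eft
    · exact etf
    · exact ett
  · intro hind c
    have he : ((∑ α : Fin K → Bool, if α k1 = true ∧ α k2 = true then ν α else 0)
        - (∑ α : Fin K → Bool, if α k1 = true then ν α else 0)
          * (∑ α : Fin K → Bool, if α k2 = true then ν α else 0)) = 0 := by
      rw [hind true true]; ring
    have hk := key c
    rw [he, zero_mul, zero_mul] at hk
    linarith
end

section
/- Let (s, θ, ν) and (s̄, θ̄, ν̄) be two valid BLESS parameter sets (same K, p, d) whose joint probability mass functions agree: P(y = c | s, θ, ν) = P(y = c | s̄, θ̄, ν̄) for every c ∈ {1,…,d}^p. Then for every j ∈ {1,…,p} and every c ∈ {1,…,d}: θ̄^{(j)}_{c|0} ≠ θ^{(j)}_{c|1} and θ̄^{(j)}_{c|1} ≠ θ^{(j)}_{c|0}. -/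
open Finset

/-- Summing a product over all configurations with coordinate `j` pinned to `c`
collapses to the single factor at `j`, using that each table column sums to one. -/
lemma bless_inner_sum {K p d : ℕ} (θ : Fin p → Fin d → Bool → ℝ)
    (hsum : ∀ j x, ∑ c, θ j c x = 1) (α : Fin K → Bool) (s : Fin p → Fin K)
    (j : Fin p) (c : Fin d) :
    ∑ c' : Fin p → Fin d, (if c' j = c then ∏ j', θ j' (c' j') (α (s j')) else 0)
      = θ j c (α (s j)) := by
  have h1 : ∀ c' : Fin p → Fin d,
      (if c' j = c then ∏ j', θ j' (c' j') (α (s j')) else 0)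
      = ∏ j', (if j' = j ∧ c' j' ≠ c then 0 else θ j' (c' j') (α (s j'))) := by
    intro c'
    by_cases h : c' j = c
    · rw [if_pos h]
      refine Finset.prod_congr rfl fun j' _ => ?_
      by_cases hj : j' = j
      · subst hj; simp [h]
      · simp [hj]
    · rw [if_neg h, eq_comm]
      apply Finset.prod_eq_zero (Finset.mem_univ j)
      simp [h]
  rw [Finset.sum_congr rfl fun c' _ => h1 c']
  rw [← Fintype.piFinset_univ, ← Finset.prod_univ_sum
    (fun _ => Finset.univ) (fun j' x => if j' = j ∧ x ≠ c then 0 else θ j' x (α (s j')))]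
  rw [Finset.prod_eq_single j]
  · have hx : ∀ x : Fin d, (if j = j ∧ x ≠ c then 0 else θ j x (α (s j)))
        = if x = c then θ j c (α (s j)) else 0 := by
      intro x; by_cases hx : x = c <;> simp [hx]
    rw [Finset.sum_congr rfl fun x _ => hx x, Finset.sum_ite_eq' Finset.univ c]
    simp
  · intro j' _ hj'
    have hx : ∀ x, (if j' = j ∧ x ≠ c then 0 else θ j' x (α (s j'))) = θ j' x (α (s j')) := by
      intro x; simp [hj']
    rw [Finset.sum_congr rfl fun x _ => hx x, hsum]
  · simp

/-- Marginal distribution of the `j`-th observed variable. -/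
lemma bless_marginal {K p d : ℕ} (s : Fin p → Fin K) (θ : Fin p → Fin d → Bool → ℝ)
    (ν : (Fin K → Bool) → ℝ) (hsum : ∀ j x, ∑ c, θ j c x = 1) (j : Fin p) (c : Fin d) :
    ∑ c' : Fin p → Fin d, (if c' j = c then blessPMF s θ ν c' else 0)
      = ∑ α, ν α * θ j c (α (s j)) := by
  unfold blessPMF
  have h1 : ∀ c' : Fin p → Fin d,
      (if c' j = c then ∑ α : Fin K → Bool, ν α * ∏ j', θ j' (c' j') (α (s j')) else 0)
      = ∑ α : Fin K → Bool, ν α * (if c' j = c then ∏ j', θ j' (c' j') (α (s j')) else 0) := by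
    intro c'
    by_cases h : c' j = c <;> simp [h]
  rw [Finset.sum_congr rfl fun c' _ => h1 c', Finset.sum_comm]
  refine Finset.sum_congr rfl fun α _ => ?_
  rw [← Finset.mul_sum, bless_inner_sum θ hsum α s j c]

/-- A strict convex combination lies strictly between the two values. -/
lemma bless_between {K : ℕ} (ν : (Fin K → Bool) → ℝ) (hν : ∀ α, 0 < ν α)
    (hν1 : ∑ α, ν α = 1) (k : Fin K) (f : Bool → ℝ) (b : Bool) (h : f (!b) < f b) :
    f (!b) < ∑ α : Fin K → Bool, ν α * f (α k) ∧
      (∑ α : Fin K → Bool, ν α * f (α k)) < f b := by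
  have hle : ∀ b' : Bool, f b' ≤ f b := by
    intro b'; cases b' <;> cases b <;> simp_all <;> exact h.le
  have hge : ∀ b' : Bool, f (!b) ≤ f b' := by
    intro b'; cases b' <;> cases b <;> simp_all <;> exact h.le
  constructor
  · have key : ∑ α : Fin K → Bool, ν α * f (!b) < ∑ α : Fin K → Bool, ν α * f (α k) := by
      apply Finset.sum_lt_sum
      · intro α _; exact mul_le_mul_of_nonneg_left (hge (α k)) (hν α).le
      · exact ⟨fun _ => b, Finset.mem_univ _, mul_lt_mul_of_pos_left h (hν _)⟩
    calc f (!b) = ∑ α : Fin K → Bool, ν α * f (!b) := by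
          rw [← Finset.sum_mul, hν1, one_mul]
      _ < _ := key
  · have key : ∑ α : Fin K → Bool, ν α * f (α k) < ∑ α : Fin K → Bool, ν α * f b := by
      apply Finset.sum_lt_sum
      · intro α _; exact mul_le_mul_of_nonneg_left (hle (α k)) (hν α).le
      · exact ⟨fun _ => !b, Finset.mem_univ _, mul_lt_mul_of_pos_left h (hν _)⟩
    calc ∑ α : Fin K → Bool, ν α * f (α k) < ∑ α : Fin K → Bool, ν α * f b := key
      _ = f b := by rw [← Finset.sum_mul, hν1, one_mul]

/-- For the last category the monotonicity is reversed. -/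
lemma bless_last_cat {p d : ℕ} (hd : 2 ≤ d) (θ : Fin p → Fin d → Bool → ℝ)
    (hsum : ∀ j x, ∑ c, θ j c x = 1)
    (hmono : ∀ j (c : Fin d), (c : ℕ) + 1 < d → θ j c false < θ j c true)
    (j : Fin p) (c : Fin d) (hc : ¬ (c : ℕ) + 1 < d) :
    θ j c true < θ j c false := by
  by_contra hcon
  push_neg at hcon
  have hlt : ∑ c', θ j c' false < ∑ c', θ j c' true := by
    apply Finset.sum_lt_sum
    · intro c' _
      by_cases h : (c' : ℕ) + 1 < d
      · exact (hmono j c' h).le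
      · have hval : (c' : ℕ) = (c : ℕ) := by
          have h1 := c'.isLt; have h2 := c.isLt; omega
        have hcc : c' = c := Fin.ext hval
        rw [hcc]; exact hcon
    · have h0 : (0 : ℕ) + 1 < d := by omega
      refine ⟨⟨0, by omega⟩, Finset.mem_univ _, hmono j ⟨0, by omega⟩ h0⟩
  rw [hsum j false, hsum j true] at hlt
  exact lt_irrefl 1 hlt

/-- if two valid BLESS parameter sets give the same joint distribution,
then for every observed variable `j` and category `c`, the alternative conditional
probabilities cannot cross the true ones: `θ̄^{(j)}_{c|0} ≠ θ^{(j)}_{c|1}` and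
`θ̄^{(j)}_{c|1} ≠ θ^{(j)}_{c|0}`. -/
theorem bless_theta_noncrossing {K p d : ℕ} (hd : 2 ≤ d)
    (s sb : Fin p → Fin K)
    (θ θb : Fin p → Fin d → Bool → ℝ) (ν νb : (Fin K → Bool) → ℝ)
    (h1 : BlessValid θ ν) (h2 : BlessValid θb νb)
    (heq : ∀ c, blessPMF s θ ν c = blessPMF sb θb νb c) :
    ∀ (j : Fin p) (c : Fin d),
      θb j c false ≠ θ j c true ∧ θb j c true ≠ θ j c false := by
  intro j c
  have hmeq : (∑ α : Fin K → Bool, ν α * θ j c (α (s j)))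
      = ∑ α : Fin K → Bool, νb α * θb j c (α (sb j)) := by
    rw [← bless_marginal s θ ν h1.theta_sum j c, ← bless_marginal sb θb νb h2.theta_sum j c]
    exact Finset.sum_congr rfl fun c' _ => by rw [heq c']
  by_cases hcd : (c : ℕ) + 1 < d
  · have o1 := bless_between ν h1.nu_pos h1.nu_sum (s j) (θ j c) true
      (by simpa using h1.theta_mono j c hcd)
    have o2 := bless_between νb h2.nu_pos h2.nu_sum (sb j) (θb j c) true
      (by simpa using h2.theta_mono j c hcd)
    simp only [Bool.not_true] at o1 o2
    constructor <;> intro hbad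
    · linarith [o1.2, o2.1, hmeq, hbad]
    · linarith [o1.1, o2.2, hmeq, hbad]
  · have m1 := bless_last_cat hd θ h1.theta_sum h1.theta_mono j c hcd
    have m2 := bless_last_cat hd θb h2.theta_sum h2.theta_mono j c hcd
    have o1 := bless_between ν h1.nu_pos h1.nu_sum (s j) (θ j c) false
      (by simpa using m1)
    have o2 := bless_between νb h2.nu_pos h2.nu_sum (sb j) (θb j c) false
      (by simpa using m2)
    simp only [Bool.not_false] at o1 o2
    constructor <;> intro hbad
    · linarith [o1.1, o2.2, hmeq, hbad]
    · linarith [o1.2, o2.1, hmeq, hbad]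
end

section
/- Consider the BLESS model with p = 2K observed variables and the parent map s given by s(j) = j and s(K + j) = j for every j ∈ {1,…,K} (so each latent variable α_k has exactly the two observed children y_k and y_{K+k}). Let (s, θ, ν) be a valid parameter set and let (s̄, θ̄, ν̄) be another valid parameter set with an arbitrary parent map s̄ : {1,…,2K} → {1,…,K}, such that their joint probability mass functions agree. Let h ∈ {1,…,K}, let A ⊆ {1,…,K}\{h}, and let B ⊆ {K+1,…,2K} be such that K + h ∉ B and K + k ∈ B for every k ∈ A. Then s̄(h) ∉ {s̄(k) : k ∈ A}. -/
/-!
Suppose `sb h = sb k` with `k ≠ h`. For each observed variable the two columns of its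
conditional probability table are linearly independent (monotonicity at the first category),
so there are test functions `φ j x` with `E[φ j x (y_j) | α_{s j} = z] = [x = z]`. Testing
`(y_h, y_k)` against `(y_{K+h}, y_{K+k})` with these functions gives a `4 × 4` moment matrix,
indexed by the values of `(α_h, α_k)`, which is the same for both parameter sets. Under the
doubled parent map it is diagonal with positive diagonal, hence of rank 4. Under `sb` the row
variables `y_h, y_k` depend on the latent vector only through the single binary coordinate
`α_{sb h}`, so the matrix factors through `Bool` and has rank at most 2.
-/

open Finset

/-- The "doubled" parent map on `p = 2K` observed variables: `s(j) = j` and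
`s(K + j) = j` for `j ∈ {1,…,K}`, so each latent variable `α_k` has exactly the two
observed children `y_k` and `y_{K+k}`. -/
def sdup (K : ℕ) : Fin (K + K) → Fin K := fun j =>
  if h : (j : ℕ) < K then ⟨j, h⟩ else ⟨(j : ℕ) - K, by have := j.isLt; omega⟩

theorem Matrix.card_le_card_of_diagonal_eq_mul {ι κ R : Type*} [Fintype ι] [Fintype κ]
    [DecidableEq ι] [Field R] {D : ι → R} (hD : ∀ i, D i ≠ 0) (C : Matrix ι κ R)
    (Q : Matrix κ ι R) (hCQ : diagonal D = C * Q) :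
    Fintype.card ι ≤ Fintype.card κ := by
  have hunit : IsUnit (diagonal D) :=
    isUnit_diagonal.mpr (Pi.isUnit_iff.mpr fun i => (hD i).isUnit)
  calc Fintype.card ι = (diagonal D).rank := (rank_of_isUnit _ hunit).symm
    _ ≤ C.rank := hCQ ▸ rank_mul_le_left C Q
    _ ≤ Fintype.card κ := rank_le_card_width C

theorem exists_dual_weights {ι R : Type*} [Fintype ι] [DecidableEq ι] [Field R]
    (v : Bool → ι → R) (hv : ∀ z, ∑ i, v z i = 1) {i₀ : ι} (hi₀ : v false i₀ ≠ v true i₀) :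
    ∃ φ : Bool → ι → R, ∀ x z, ∑ i, φ x i * v z i = if x = z then 1 else 0 := by
  set Δ := v true i₀ - v false i₀
  have hΔ : Δ ≠ 0 := sub_ne_zero.mpr hi₀.symm
  -- `ψ` reads off the affine coordinate of `v z` along the segment from `v false` to `v true`.
  set ψ : ι → R := fun i => ((Pi.single i₀ 1 : ι → R) i - v false i₀) / Δ
  have hψ : ∀ z, ∑ i, ψ i * v z i = (v z i₀ - v false i₀) / Δ := by
    intro z
    simp only [ψ, div_mul_eq_mul_div, sub_mul, ← sum_div, sum_sub_distrib, ← mul_sum, hv,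
      Pi.single_apply, ite_mul, one_mul, zero_mul, sum_ite_eq', mem_univ, if_true, mul_one]
  refine ⟨fun x => if x then ψ else fun i => 1 - ψ i, fun x z => ?_⟩
  cases x <;> cases z <;>
    simp [sub_mul, sum_sub_distrib, hv, hψ, Δ, div_self hΔ]

theorem BlessValid.exists_dual_weights {K p d : ℕ} {θ : Fin p → Fin d → Bool → ℝ}
    {ν : (Fin K → Bool) → ℝ} (hv : BlessValid θ ν) (hd : 2 ≤ d) :
    ∃ φ : Fin p → Bool → Fin d → ℝ,
      ∀ j x z, ∑ i, φ j x i * θ j i z = if x = z then 1 else 0 := by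
  have hmono j := hv.theta_mono j ⟨0, by omega⟩ (by simp; omega)
  exact Classical.skolem.mp fun j =>
    _root_.exists_dual_weights (fun z i => θ j i z) (hv.theta_sum j) (hmono j).ne

@[simp]
theorem sdup_castAdd {K : ℕ} (i : Fin K) : sdup K (Fin.castAdd K i) = i := by
  simp [sdup]

@[simp]
theorem sdup_natAdd {K : ℕ} (i : Fin K) : sdup K (Fin.natAdd K i) = i := by
  simp [sdup]

section Moments

variable {K p d : ℕ}

theorem sum_prod_mul_blessPMF (s : Fin p → Fin K) (θ : Fin p → Fin d → Bool → ℝ)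
    (ν : (Fin K → Bool) → ℝ) (w : Fin p → Fin d → ℝ) :
    ∑ c : Fin p → Fin d, (∏ j, w j (c j)) * blessPMF s θ ν c
      = ∑ α : Fin K → Bool, ν α * ∏ j, ∑ i, w j i * θ j i (α (s j)) := by
  simp only [blessPMF, mul_sum, Fintype.prod_sum]
  rw [sum_comm]
  refine sum_congr rfl fun α _ => sum_congr rfl fun c _ => ?_
  rw [prod_mul_distrib]
  ring

/-- The expectation of `∏ j, φ j x (y_j)` over the `j` with `σ j = some x`; `σ j = none` leaves
`y_j` untested. -/
def testMoment (s : Fin p → Fin K) (θ : Fin p → Fin d → Bool → ℝ) (ν : (Fin K → Bool) → ℝ)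
    (φ : Fin p → Bool → Fin d → ℝ) (σ : Fin p → Option Bool) : ℝ :=
  ∑ α : Fin K → Bool, ν α * ∏ j, (σ j).elim 1 fun x => ∑ i, φ j x i * θ j i (α (s j))

theorem testMoment_eq_sum_prod_mul_blessPMF (s : Fin p → Fin K)
    {θ : Fin p → Fin d → Bool → ℝ} (hθ : ∀ j z, ∑ i, θ j i z = 1) (ν : (Fin K → Bool) → ℝ)
    (φ : Fin p → Bool → Fin d → ℝ) (σ : Fin p → Option Bool) :
    testMoment s θ ν φ σ
      = ∑ c : Fin p → Fin d, (∏ j, (σ j).elim 1 (φ j) (c j)) * blessPMF s θ ν c := by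
  rw [sum_prod_mul_blessPMF, testMoment]
  refine sum_congr rfl fun α _ => congrArg _ (prod_congr rfl fun j _ => ?_)
  cases σ j <;> simp [hθ]

theorem testMoment_eq_of_blessPMF_eq {s s' : Fin p → Fin K} {θ θ' : Fin p → Fin d → Bool → ℝ}
    {ν ν' : (Fin K → Bool) → ℝ} (hθ : ∀ j z, ∑ i, θ j i z = 1) (hθ' : ∀ j z, ∑ i, θ' j i z = 1)
    (heq : ∀ c, blessPMF s θ ν c = blessPMF s' θ' ν' c) (φ : Fin p → Bool → Fin d → ℝ)
    (σ : Fin p → Option Bool) : testMoment s θ ν φ σ = testMoment s' θ' ν' φ σ := by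
  simp only [testMoment_eq_sum_prod_mul_blessPMF _ hθ, testMoment_eq_sum_prod_mul_blessPMF _ hθ',
    heq]

end Moments

def pairSelect {K : ℕ} (h k : Fin K) (u : Bool × Bool) (i : Fin K) : Option Bool :=
  if i = h then some u.1 else if i = k then some u.2 else none

theorem prod_elim_pairSelect {K : ℕ} {h k : Fin K} (hkh : k ≠ h) (u : Bool × Bool)
    (f : Fin K → Bool → ℝ) :
    ∏ i, (pairSelect h k u i).elim 1 (f i) = f h u.1 * f k u.2 := by
  rw [Fintype.prod_eq_mul h k hkh.symm fun i hi => by simp [pairSelect, hi.1, hi.2]]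
  simp [pairSelect, hkh]

theorem sum_mul_ite_mul_ite_eq_diagonal {α ι R : Type*} [Fintype α] [DecidableEq ι]
    [CommSemiring R] (ν : α → R) (f : α → ι) (u v : ι) :
    ∑ a, ν a * ((if f a = u then 1 else 0) * if f a = v then 1 else 0)
      = Matrix.diagonal (fun w => ∑ a with f a = w, ν a) u v := by
  rw [Matrix.diagonal_apply, sum_filter]
  split_ifs with huv
  · subst huv
    exact sum_congr rfl fun a _ => by split_ifs <;> ring
  · exact sum_eq_zero fun a _ => by
      rw [ite_zero_mul_ite_zero, if_neg fun ha => huv (ha.1.symm.trans ha.2), mul_zero]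

section DoubledStructure

variable {K d : ℕ} {h k : Fin K}

theorem testMoment_sdup_pairSelect {θ : Fin (K + K) → Fin d → Bool → ℝ}
    {φ : Fin (K + K) → Bool → Fin d → ℝ}
    (hφ : ∀ j x z, ∑ i, φ j x i * θ j i z = if x = z then 1 else 0) (hkh : k ≠ h)
    (ν : (Fin K → Bool) → ℝ) (u v : Bool × Bool) :
    testMoment (sdup K) θ ν φ (Fin.append (pairSelect h k u) (pairSelect h k v))
      = Matrix.diagonal (fun w => ∑ α with (α h, α k) = w, ν α) u v := by
  have hpair (w : Bool × Bool) (a b : Bool) :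
      ((if w.1 = a then (1 : ℝ) else 0) * if w.2 = b then 1 else 0)
        = if (a, b) = w then 1 else 0 := by
    simp only [ite_zero_mul_ite_zero, one_mul, Prod.ext_iff, eq_comm]
  simp only [testMoment, Fin.prod_univ_add, Fin.append_left, Fin.append_right, sdup_castAdd,
    sdup_natAdd, hφ, prod_elim_pairSelect hkh, hpair]
  exact sum_mul_ite_mul_ite_eq_diagonal ν (fun α => (α h, α k)) u v

theorem exists_testMoment_pairSelect_eq_mul {sb : Fin (K + K) → Fin K}
    (hsb : sb (Fin.castAdd K h) = sb (Fin.castAdd K k)) (hkh : k ≠ h)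
    (θ : Fin (K + K) → Fin d → Bool → ℝ) (ν : (Fin K → Bool) → ℝ)
    (φ : Fin (K + K) → Bool → Fin d → ℝ) :
    ∃ (C : Matrix (Bool × Bool) Bool ℝ) (Q : Matrix Bool (Bool × Bool) ℝ), ∀ u v,
      testMoment sb θ ν φ (Fin.append (pairSelect h k u) (pairSelect h k v)) = (C * Q) u v := by
  generalize hm : sb (Fin.castAdd K h) = m at hsb
  let g : Fin (K + K) → Bool → Bool → ℝ := fun j x z => ∑ i, φ j x i * θ j i z
  let C : Matrix (Bool × Bool) Bool ℝ :=
    .of fun u z => g (Fin.castAdd K h) u.1 z * g (Fin.castAdd K k) u.2 z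
  let E : Matrix Bool (Fin K → Bool) ℝ := .of fun z α => if α m = z then ν α else 0
  let F : Matrix (Fin K → Bool) (Bool × Bool) ℝ := .of fun α v =>
    ∏ i, (pairSelect h k v i).elim 1 fun x => g (Fin.natAdd K i) x (α (sb (Fin.natAdd K i)))
  refine ⟨C, E * F, fun u v => ?_⟩
  rw [← Matrix.mul_assoc, Matrix.mul_apply, testMoment]
  refine sum_congr rfl fun α _ => ?_
  simp only [C, E, F, g, Fin.prod_univ_add, Fin.append_left, Fin.append_right,
    prod_elim_pairSelect hkh, Matrix.mul_apply, Matrix.of_apply, mul_ite, mul_zero, sum_ite_eq,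
    mem_univ, if_true, hm, ← hsb]
  ring

end DoubledStructure

theorem bless_graph_separation_general {K d : ℕ} (hd : 2 ≤ d)
    (θ θb : Fin (K + K) → Fin d → Bool → ℝ) (ν νb : (Fin K → Bool) → ℝ)
    (sb : Fin (K + K) → Fin K)
    (h1 : BlessValid θ ν) (h2 : BlessValid θb νb)
    (heq : ∀ c, blessPMF (sdup K) θ ν c = blessPMF sb θb νb c)
    (h : Fin K) (A : Finset (Fin K)) (hA : h ∉ A) :
    ∀ k ∈ A, sb (Fin.castAdd K h) ≠ sb (Fin.castAdd K k) := by
  intro k hk hsb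
  have hkh : k ≠ h := fun e => hA (e ▸ hk)
  obtain ⟨φ, hφ⟩ := h1.exists_dual_weights hd
  obtain ⟨C, Q, hCQ⟩ := exists_testMoment_pairSelect_eq_mul hsb hkh θb νb φ
  have hD (w : Bool × Bool) : ∑ α with (α h, α k) = w, ν α ≠ 0 :=
    (sum_pos (fun α _ => h1.nu_pos α) ⟨fun i => if i = h then w.1 else w.2, by simp [hkh]⟩).ne'
  have hdiag : Matrix.diagonal (fun w => ∑ α with (α h, α k) = w, ν α) = C * Q := by
    ext u v
    rw [← testMoment_sdup_pairSelect hφ hkh,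
      testMoment_eq_of_blessPMF_eq h1.theta_sum h2.theta_sum heq, hCQ]
  simpa using Matrix.card_le_card_of_diagonal_eq_mul hD C Q hdiag

/-- under the doubled parent map, if an alternative valid parameter set
with arbitrary parent map `sb` gives the same joint distribution, and `A`, `B` are as in
the hypotheses (with `K + h ∉ B` and `K + k ∈ B` for all `k ∈ A`), then
`sb(h) ∉ {sb(k) : k ∈ A}`. -/
theorem bless_graph_separation {K d : ℕ} (hd : 2 ≤ d)
    (θ θb : Fin (K + K) → Fin d → Bool → ℝ) (ν νb : (Fin K → Bool) → ℝ)
    (sb : Fin (K + K) → Fin K)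
    (h1 : BlessValid θ ν) (h2 : BlessValid θb νb)
    (heq : ∀ c, blessPMF (sdup K) θ ν c = blessPMF sb θb νb c)
    (h : Fin K) (A : Finset (Fin K)) (hA : h ∉ A)
    (B : Finset (Fin (K + K))) (hB : ∀ j ∈ B, K ≤ (j : ℕ))
    (hhB : Fin.natAdd K h ∉ B) (hAB : ∀ k ∈ A, Fin.natAdd K k ∈ B) :
    ∀ k ∈ A, sb (Fin.castAdd K h) ≠ sb (Fin.castAdd K k) :=
  bless_graph_separation_general hd θ θb ν νb sb h1 h2 heq h A hA
end

section
/- Let A be an m × r real matrix and B an ℓ × r real matrix such that every column of B sums to 1 (∑_{i'=1}^ℓ B_{i',c} = 1 for every c). Let A ⊙ B denote their Khatri-Rao product. Then rank(A ⊙ B) ≥ rank(A). In particular, if A has full column rank r, then A ⊙ B also has full column rank r. -/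
open Finset

/-- Khatri-Rao product of two matrices with the same number of columns, realized on
pair row-indices: `(A ⊙ B)_{(i,i'),c} = A_{i,c} · B_{i',c}`. -/
def khatriRao2 {m l r : ℕ} (A : Matrix (Fin m) (Fin r) ℝ)
    (B : Matrix (Fin l) (Fin r) ℝ) : Matrix (Fin m × Fin l) (Fin r) ℝ :=
  Matrix.of fun ii c => A ii.1 c * B ii.2 c

/-- if every column of `B` sums to one, then the Khatri-Rao product
`A ⊙ B` has rank at least that of `A`; in particular, if `A` has full column rank `r`,
so does `A ⊙ B`. -/
theorem khatriRao_rank_ge {m l r : ℕ} (A : Matrix (Fin m) (Fin r) ℝ)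
    (B : Matrix (Fin l) (Fin r) ℝ) (hB : ∀ c, ∑ i', B i' c = 1) :
    A.rank ≤ (khatriRao2 A B).rank ∧
    (A.rank = r → (khatriRao2 A B).rank = r) := by
  have key : A.rank ≤ (khatriRao2 A B).rank := by
    set S : Matrix (Fin m) (Fin m × Fin l) ℝ :=
      Matrix.of fun i jj => if i = jj.1 then 1 else 0 with hS
    have hA : A = S * khatriRao2 A B := by
      ext i c
      simp only [Matrix.mul_apply, hS, khatriRao2, Matrix.of_apply]
      rw [Fintype.sum_prod_type]
      rw [Finset.sum_comm]
      simp only [ite_mul, one_mul, zero_mul, Finset.sum_ite_eq, Finset.mem_univ, if_true]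
      rw [← Finset.mul_sum, hB, mul_one]
    calc A.rank = (S * khatriRao2 A B).rank := by rw [← hA]
      _ ≤ (khatriRao2 A B).rank := Matrix.rank_mul_le_right S _
  refine ⟨key, fun h => le_antisymm ?_ (le_trans h.ge key)⟩
  simpa using (khatriRao2 A B).rank_le_card_width
end
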